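/- arXiv:1910.09126 — 7 statements merged into one kernel-verified Lean document; each statement's English description precedes it below -/
import Mathlib

section
/- For any nonempty set S = {e_1 < e_2 < … < e_g} ⊆ {1,…,T}, with gap(S) = max_{i∈{1,…,g+1}} (e_i − e_{i−1}) where e_0 = 0 and e_{g+1} = T, one has A_T ≤ gap(S)·(1+ρ²)/(1−ρ²) and max{B_T, C_T} ≤ gap(S)²/(1−ρ)². -/
open Finset

/-- `ρ_{s,t-1}` for a communication set `S ⊆ ℕ`: equal to
`ρ ^ |[s:t-1] ∩ S|` when `s < t`, and `1` when `s ≥ t`. -/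
noncomputable def rhoST (ρ : ℝ) (S : Finset ℕ) (s t : ℕ) : ℝ :=
  if s < t then ρ ^ ((Finset.Icc s (t - 1)) ∩ S).card else 1

/-- `A_T = (1/T) ∑_{t=1}^T ∑_{s=1}^{t-1} ρ_{s,t-1}²`. -/
noncomputable def AT (ρ : ℝ) (S : Finset ℕ) (T : ℕ) : ℝ :=
  (T : ℝ)⁻¹ * ∑ t ∈ Finset.Icc 1 T, ∑ s ∈ Finset.Icc 1 (t - 1), (rhoST ρ S s t) ^ 2

/-- `B_T = (1/T) ∑_{t=1}^T (∑_{s=1}^{t-1} ρ_{s,t-1})²`. -/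
noncomputable def BT (ρ : ℝ) (S : Finset ℕ) (T : ℕ) : ℝ :=
  (T : ℝ)⁻¹ * ∑ t ∈ Finset.Icc 1 T, (∑ s ∈ Finset.Icc 1 (t - 1), rhoST ρ S s t) ^ 2

/-- `C_T = max_{s∈[T-1]} ∑_{t=s+1}^T ρ_{s,t-1}·(∑_{l=1}^{t-1} ρ_{l,t-1})`. -/
noncomputable def CT (ρ : ℝ) (S : Finset ℕ) (T : ℕ) : ℝ :=
  ⨆ s ∈ Finset.Icc 1 (T - 1),
    ∑ t ∈ Finset.Icc (s + 1) T, rhoST ρ S s t * ∑ l ∈ Finset.Icc 1 (t - 1), rhoST ρ S l t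

/-- Auxiliary: a geometric-type bound for a sum of `r ^ f s` over a finset `F`,
assuming any fiber of `f` has diameter `< N`. -/
lemma aux_sum_pow_le (r : ℝ) (hr0 : 0 ≤ r) (hr1 : r < 1) (N : ℕ)
    (F : Finset ℕ) (f : ℕ → ℕ)
    (hfib : ∀ s ∈ F, ∀ s' ∈ F, s ≤ s' → f s = f s' → s' < s + N) :
    ∑ s ∈ F, r ^ f s ≤ N / (1 - r) := by
  have h1r : (0:ℝ) < 1 - r := by linarith
  have hcard : ∀ j ∈ F.image f, (((F.filter fun s => f s = j)).card : ℝ) ≤ N := by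
    intro j hj
    obtain ⟨s0, hs0, rfl⟩ := Finset.mem_image.mp hj
    set Fj := F.filter fun s => f s = f s0 with hFj
    have hne : s0 ∈ Fj := Finset.mem_filter.mpr ⟨hs0, rfl⟩
    set m := Fj.min' ⟨s0, hne⟩ with hm
    have hmF : m ∈ Fj := Finset.min'_mem _ _
    have hsub : Fj ⊆ Finset.Ico m (m + N) := by
      intro x hx
      have hmx : m ≤ x := Finset.min'_le _ _ hx
      have hlt := hfib m (Finset.mem_filter.mp hmF).1 x (Finset.mem_filter.mp hx).1 hmx
        (((Finset.mem_filter.mp hmF).2).trans ((Finset.mem_filter.mp hx).2).symm)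
      exact Finset.mem_Ico.mpr ⟨hmx, hlt⟩
    calc (Fj.card : ℝ) ≤ ((Finset.Ico m (m + N)).card : ℝ) := by
          exact_mod_cast Finset.card_le_card hsub
      _ = N := by simp
  calc ∑ s ∈ F, r ^ f s
      = ∑ j ∈ F.image f, ∑ s ∈ F.filter fun s => f s = j, r ^ f s :=
        (Finset.sum_fiberwise_of_maps_to (fun x hx => Finset.mem_image_of_mem f hx) _).symm
    _ ≤ ∑ j ∈ F.image f, (N : ℝ) * r ^ j := by
        refine Finset.sum_le_sum fun j hj => ?_
        have hrw : ∑ s ∈ F.filter (fun s => f s = j), r ^ f s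
            = ((F.filter fun s => f s = j).card : ℝ) * r ^ j := by
          rw [Finset.sum_congr rfl fun s hs => by rw [(Finset.mem_filter.mp hs).2],
            Finset.sum_const, nsmul_eq_mul]
        rw [hrw]
        exact mul_le_mul_of_nonneg_right (hcard j hj) (pow_nonneg hr0 _)
    _ = N * ∑ j ∈ F.image f, r ^ j := (Finset.mul_sum _ _ _).symm
    _ ≤ N * (1 - r)⁻¹ := by
        refine mul_le_mul_of_nonneg_left ?_ (Nat.cast_nonneg N)
        have hsum : ∑ j ∈ F.image f, r ^ j ≤ ∑' j : ℕ, r ^ j :=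
          Summable.sum_le_tsum _ (fun j _ => pow_nonneg hr0 _) (summable_geometric_of_lt_one hr0 hr1)
        rwa [tsum_geometric_of_lt_one hr0 hr1] at hsum
    _ = N / (1 - r) := (div_eq_mul_inv _ _).symm

lemma rhoST_nonneg (ρ : ℝ) (hρ0 : 0 ≤ ρ) (S : Finset ℕ) (s t : ℕ) :
    0 ≤ rhoST ρ S s t := by
  unfold rhoST
  split
  · exact pow_nonneg hρ0 _
  · exact zero_le_one

/-- **Theorem (bounds via the gap of the update scheme).**
For a nonempty scheme `S = {e₁ < … < e_g} ⊆ [T]`, with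
`gap(S) = max_{i∈[g+1]} (e_i − e_{i−1})` (where `e₀ = 0`, `e_{g+1} = T`), one has
`A_T ≤ gap(S)·(1+ρ²)/(1−ρ²)` and `max{B_T, C_T} ≤ gap(S)²/(1−ρ)²`. -/
theorem gap_bounds
    (ρ : ℝ) (hρ0 : 0 ≤ ρ) (hρ1 : ρ < 1)
    (T g : ℕ) (hg : 1 ≤ g)
    (e : ℕ → ℕ)
    (he0 : e 0 = 0) (heTop : e (g + 1) = T)
    (hmono : ∀ i j, i ≤ g → j ≤ g → i < j → e i < e j)
    (hlast : e g ≤ T)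
    (S : Finset ℕ)
    (hSdef : S = (Finset.Icc 1 g).image e)
    (hS : S ⊆ Finset.Icc 1 T) :
    AT ρ S T ≤ (((Finset.Icc 1 (g + 1)).sup fun i => e i - e (i - 1) : ℕ) : ℝ) *
        (1 + ρ ^ 2) / (1 - ρ ^ 2) ∧
      max (BT ρ S T) (CT ρ S T) ≤
        ((((Finset.Icc 1 (g + 1)).sup fun i => e i - e (i - 1) : ℕ) : ℝ)) ^ 2 /
          (1 - ρ) ^ 2 := by
  set N : ℕ := (Finset.Icc 1 (g + 1)).sup fun i => e i - e (i - 1) with hN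
  -- basic facts
  have heg : 1 ≤ e g := by
    have := hmono 0 g (Nat.zero_le g) le_rfl hg
    omega
  have hT1 : 1 ≤ T := le_trans heg hlast
  have hsubN : ∀ i, 1 ≤ i → i ≤ g + 1 → e i - e (i - 1) ≤ N := by
    intro i h1 h2
    rw [hN]
    exact Finset.le_sup (f := fun i => e i - e (i - 1)) (Finset.mem_Icc.mpr ⟨h1, h2⟩)
  have hN1 : 1 ≤ N := by
    have h1 := hsubN 1 le_rfl (by omega)
    norm_num at h1
    have h2 : e 0 < e 1 := hmono 0 1 (Nat.zero_le g) hg Nat.one_pos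
    omega
  -- the key gap lemma: an S-free interval inside [1, T-1] has length < N - 1
  have hG : ∀ a b : ℕ, 1 ≤ a → a ≤ b → b ≤ T - 1 → Finset.Icc a b ∩ S = ∅ →
      b + 2 ≤ a + N := by
    intro a b ha hab hbT hempty
    have hex : ∃ i, 1 ≤ i ∧ a ≤ e i := ⟨g + 1, by omega, by rw [heTop]; omega⟩
    obtain ⟨hi1, hia⟩ := Nat.find_spec hex
    have hile : Nat.find hex ≤ g + 1 := Nat.find_min' hex ⟨by omega, by rw [heTop]; omega⟩
    have hprev : e (Nat.find hex - 1) < a := by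
      rcases Nat.eq_or_lt_of_le hi1 with h | h
      · rw [← h]
        show e 0 < a
        rw [he0]; omega
      · have hmin := Nat.find_min hex (m := Nat.find hex - 1) (by omega)
        push_neg at hmin
        exact hmin (by omega)
    have hsubi := hsubN (Nat.find hex) hi1 hile
    rcases Nat.lt_or_ge (Nat.find hex) (g + 1) with hig | hig
    · -- i ≤ g : e i ∈ S, hence e i > b
      have heiS : e (Nat.find hex) ∈ S := by
        rw [hSdef]
        exact Finset.mem_image.mpr ⟨Nat.find hex, Finset.mem_Icc.mpr ⟨hi1, by omega⟩, rfl⟩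
      have hnotin : e (Nat.find hex) ∉ Finset.Icc a b := by
        intro hin
        have hmem : e (Nat.find hex) ∈ Finset.Icc a b ∩ S := Finset.mem_inter.mpr ⟨hin, heiS⟩
        simp [hempty] at hmem
      have hbe : b < e (Nat.find hex) := by
        by_contra hcon
        exact hnotin (Finset.mem_Icc.mpr ⟨hia, by omega⟩)
      omega
    · -- i = g + 1 : e i = T
      have hieq : Nat.find hex = g + 1 := by omega
      rw [hieq] at hsubi hprev
      simp only [Nat.add_sub_cancel, heTop] at hsubi hprev
      omega
  -- fiber bound for sums over s (fixed t ≤ T)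
  have hfib_s : ∀ t, t ≤ T → ∀ s ∈ Finset.Icc 1 (t - 1), ∀ s' ∈ Finset.Icc 1 (t - 1),
      s ≤ s' → ((Finset.Icc s (t - 1)) ∩ S).card = ((Finset.Icc s' (t - 1)) ∩ S).card →
      s' < s + N := by
    intro t ht s hs s' hs' hss' hcard
    rw [Finset.mem_Icc] at hs hs'
    rcases Nat.eq_or_lt_of_le hss' with h | h
    · omega
    · have hsplit : Finset.Icc s (t - 1) ∩ S
          = (Finset.Icc s (s' - 1) ∩ S) ∪ (Finset.Icc s' (t - 1) ∩ S) := by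
        ext x
        by_cases hx : x ∈ S <;>
          simp only [Finset.mem_inter, Finset.mem_Icc, Finset.mem_union, hx, and_true,
            and_false, or_false] <;> omega
      have hdisj : Disjoint (Finset.Icc s (s' - 1) ∩ S) (Finset.Icc s' (t - 1) ∩ S) := by
        rw [Finset.disjoint_left]
        intro x hx1 hx2
        rw [Finset.mem_inter, Finset.mem_Icc] at hx1 hx2
        omega
      have hcards : (Finset.Icc s (t - 1) ∩ S).card
          = (Finset.Icc s (s' - 1) ∩ S).card + (Finset.Icc s' (t - 1) ∩ S).card := by
        rw [hsplit, Finset.card_union_of_disjoint hdisj]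
      have hzero : (Finset.Icc s (s' - 1) ∩ S).card = 0 := by omega
      have hempty : Finset.Icc s (s' - 1) ∩ S = ∅ := Finset.card_eq_zero.mp hzero
      have := hG s (s' - 1) hs.1 (by omega) (by omega) hempty
      omega
  -- fiber bound for sums over t (fixed s ≥ 1)
  have hfib_t : ∀ s, 1 ≤ s → ∀ t ∈ Finset.Icc (s + 1) T, ∀ t' ∈ Finset.Icc (s + 1) T,
      t ≤ t' → ((Finset.Icc s (t - 1)) ∩ S).card = ((Finset.Icc s (t' - 1)) ∩ S).card →
      t' < t + N := by
    intro s hs1 t ht t' ht' htt' hcard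
    rw [Finset.mem_Icc] at ht ht'
    rcases Nat.eq_or_lt_of_le htt' with h | h
    · omega
    · have hsplit : Finset.Icc s (t' - 1) ∩ S
          = (Finset.Icc s (t - 1) ∩ S) ∪ (Finset.Icc t (t' - 1) ∩ S) := by
        ext x
        by_cases hx : x ∈ S <;>
          simp only [Finset.mem_inter, Finset.mem_Icc, Finset.mem_union, hx, and_true,
            and_false, or_false] <;> omega
      have hdisj : Disjoint (Finset.Icc s (t - 1) ∩ S) (Finset.Icc t (t' - 1) ∩ S) := by
        rw [Finset.disjoint_left]
        intro x hx1 hx2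
        rw [Finset.mem_inter, Finset.mem_Icc] at hx1 hx2
        omega
      have hcards : (Finset.Icc s (t' - 1) ∩ S).card
          = (Finset.Icc s (t - 1) ∩ S).card + (Finset.Icc t (t' - 1) ∩ S).card := by
        rw [hsplit, Finset.card_union_of_disjoint hdisj]
      have hzero : (Finset.Icc t (t' - 1) ∩ S).card = 0 := by omega
      have hempty : Finset.Icc t (t' - 1) ∩ S = ∅ := Finset.card_eq_zero.mp hzero
      have := hG t (t' - 1) (by omega) (by omega) (by omega) hempty
      omega
  -- inner geometric sums over s
  have hinner : ∀ r : ℝ, 0 ≤ r → r < 1 → ∀ t, t ≤ T →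
      ∑ s ∈ Finset.Icc 1 (t - 1), r ^ ((Finset.Icc s (t - 1)) ∩ S).card ≤ N / (1 - r) := by
    intro r hr0 hr1 t ht
    exact aux_sum_pow_le r hr0 hr1 N _ _ (hfib_s t ht)
  -- geometric sums over t
  have houter : ∀ s, 1 ≤ s →
      ∑ t ∈ Finset.Icc (s + 1) T, ρ ^ ((Finset.Icc s (t - 1)) ∩ S).card ≤ N / (1 - ρ) := by
    intro s hs1
    exact aux_sum_pow_le ρ hρ0 hρ1 N _ _ (hfib_t s hs1)
  have h1ρ : (0:ℝ) < 1 - ρ := by linarith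
  have h1ρ2 : (0:ℝ) < 1 - ρ ^ 2 := by nlinarith
  have hNnn : (0:ℝ) ≤ N := Nat.cast_nonneg N
  -- rewriting rhoST inside inner sums
  have hrho_eq : ∀ t s, s ∈ Finset.Icc 1 (t - 1) →
      rhoST ρ S s t = ρ ^ ((Finset.Icc s (t - 1)) ∩ S).card := by
    intro t s hs
    rw [Finset.mem_Icc] at hs
    rw [rhoST, if_pos (by omega)]
  -- bound on ∑ rhoST over s, for t ≤ T
  have hBinner : ∀ t, t ≤ T →
      ∑ s ∈ Finset.Icc 1 (t - 1), rhoST ρ S s t ≤ N / (1 - ρ) := by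
    intro t ht
    calc ∑ s ∈ Finset.Icc 1 (t - 1), rhoST ρ S s t
        = ∑ s ∈ Finset.Icc 1 (t - 1), ρ ^ ((Finset.Icc s (t - 1)) ∩ S).card :=
          Finset.sum_congr rfl fun s hs => hrho_eq t s hs
      _ ≤ N / (1 - ρ) := hinner ρ hρ0 hρ1 t ht
  have hBinner_nonneg : ∀ t, 0 ≤ ∑ s ∈ Finset.Icc 1 (t - 1), rhoST ρ S s t :=
    fun t => Finset.sum_nonneg fun s _ => rhoST_nonneg ρ hρ0 S s t
  have hTpos : (0:ℝ) < T := by exact_mod_cast hT1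
  have havg : ∀ (v : ℕ → ℝ) (c : ℝ), (∀ t ∈ Finset.Icc 1 T, v t ≤ c) →
      (T:ℝ)⁻¹ * ∑ t ∈ Finset.Icc 1 T, v t ≤ c := by
    intro v c hv
    have hsum : ∑ t ∈ Finset.Icc 1 T, v t ≤ (T:ℝ) * c := by
      calc ∑ t ∈ Finset.Icc 1 T, v t ≤ (Finset.Icc 1 T).card • c :=
            Finset.sum_le_card_nsmul _ _ _ hv
        _ = (T:ℝ) * c := by rw [Nat.card_Icc, nsmul_eq_mul]; norm_num
    calc (T:ℝ)⁻¹ * ∑ t ∈ Finset.Icc 1 T, v t ≤ (T:ℝ)⁻¹ * ((T:ℝ) * c) :=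
          mul_le_mul_of_nonneg_left hsum (by positivity)
      _ = c := by field_simp
  constructor
  · -- A_T bound
    have hAt : ∀ t ∈ Finset.Icc 1 T,
        ∑ s ∈ Finset.Icc 1 (t - 1), (rhoST ρ S s t) ^ 2 ≤ N / (1 - ρ ^ 2) := by
      intro t ht
      rw [Finset.mem_Icc] at ht
      calc ∑ s ∈ Finset.Icc 1 (t - 1), (rhoST ρ S s t) ^ 2
          = ∑ s ∈ Finset.Icc 1 (t - 1), (ρ ^ 2) ^ ((Finset.Icc s (t - 1)) ∩ S).card := by
            refine Finset.sum_congr rfl fun s hs => ?_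
            rw [hrho_eq t s hs, ← pow_mul, ← pow_mul, Nat.mul_comm]
        _ ≤ N / (1 - ρ ^ 2) := hinner (ρ ^ 2) (by positivity) (by nlinarith) t ht.2
    have := havg _ _ hAt
    calc AT ρ S T ≤ N / (1 - ρ ^ 2) := this
      _ ≤ (N:ℝ) * (1 + ρ ^ 2) / (1 - ρ ^ 2) := by
          exact div_le_div₀ (by positivity) (by nlinarith) h1ρ2 le_rfl
  · -- B_T and C_T bounds
    have hbound : (0:ℝ) ≤ (N:ℝ) ^ 2 / (1 - ρ) ^ 2 := by positivity
    refine max_le ?_ ?_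
    · -- B_T
      have hBt : ∀ t ∈ Finset.Icc 1 T,
          (∑ s ∈ Finset.Icc 1 (t - 1), rhoST ρ S s t) ^ 2 ≤ (N:ℝ) ^ 2 / (1 - ρ) ^ 2 := by
        intro t ht
        rw [Finset.mem_Icc] at ht
        have h1 := hBinner t ht.2
        have h2 := hBinner_nonneg t
        calc (∑ s ∈ Finset.Icc 1 (t - 1), rhoST ρ S s t) ^ 2
            ≤ (N / (1 - ρ)) ^ 2 := by nlinarith
          _ = (N:ℝ) ^ 2 / (1 - ρ) ^ 2 := by rw [div_pow]
      exact havg _ _ hBt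
    · -- C_T
      rw [CT]
      refine Real.iSup_le (fun s => Real.iSup_le (fun hs => ?_) hbound) hbound
      rw [Finset.mem_Icc] at hs
      have hstep : ∀ t ∈ Finset.Icc (s + 1) T,
          rhoST ρ S s t * ∑ l ∈ Finset.Icc 1 (t - 1), rhoST ρ S l t
            ≤ ρ ^ ((Finset.Icc s (t - 1)) ∩ S).card * (N / (1 - ρ)) := by
        intro t ht
        rw [Finset.mem_Icc] at ht
        have heq : rhoST ρ S s t = ρ ^ ((Finset.Icc s (t - 1)) ∩ S).card := by
          rw [rhoST, if_pos (by omega)]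
        rw [heq]
        exact mul_le_mul_of_nonneg_left (hBinner t ht.2) (pow_nonneg hρ0 _)
      calc ∑ t ∈ Finset.Icc (s + 1) T, rhoST ρ S s t * ∑ l ∈ Finset.Icc 1 (t - 1), rhoST ρ S l t
          ≤ ∑ t ∈ Finset.Icc (s + 1) T, ρ ^ ((Finset.Icc s (t - 1)) ∩ S).card * (N / (1 - ρ)) :=
            Finset.sum_le_sum hstep
        _ = (∑ t ∈ Finset.Icc (s + 1) T, ρ ^ ((Finset.Icc s (t - 1)) ∩ S).card) * (N / (1 - ρ)) :=
            (Finset.sum_mul _ _ _).symm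
        _ ≤ (N / (1 - ρ)) * (N / (1 - ρ)) :=
            mul_le_mul_of_nonneg_right (houter s hs.1) (by positivity)
        _ = (N:ℝ) ^ 2 / (1 - ρ) ^ 2 := by rw [div_mul_div_comm, sq, sq]
end

section
/- For the update scheme I_T^1, i.e., S = {t ∈ ℕ : t mod I ∉ {1,…,I_1}} with I = I_1 + I_2, and T = (R+1)·I for some integer R ≥ 0, one has A_T ≤ (1/(2I))·( ((1+ρ^{2I_2})/(1−ρ^{2I_2}))·I_1² + ((1+ρ²)/(1−ρ²))·I_1 ) + ρ²/(1−ρ²). -/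
open Finset



/-- number of elements of `S = {l : l % (I1+I2) ∉ [1,I1]}` in `[1,n]`. -/
def Fcn (I1 I2 n : ℕ) : ℕ := n / (I1 + I2) * I2 + (n % (I1 + I2) - I1)

lemma succ_divmod (I n : ℕ) (hI : 0 < I) :
    ((n+1) % I = n % I + 1 ∧ (n+1)/I = n/I) ∨
    ((n+1) % I = 0 ∧ n % I + 1 = I ∧ (n+1)/I = n/I + 1) := by
  by_cases h : n % I + 1 = I
  · right
    have hn : n + 1 = I * (n / I + 1) := by
      have h1 := Nat.div_add_mod n I
      rw [Nat.mul_succ]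
      omega
    refine ⟨?_, h, ?_⟩
    · rw [hn, Nat.mul_mod_right]
    · rw [hn, Nat.mul_div_cancel_left _ hI]
  · left
    have hlt : n % I + 1 < I := by
      have := Nat.mod_lt n hI
      omega
    have hn : n + 1 = (n % I + 1) + I * (n / I) := by
      have h1 := Nat.div_add_mod n I
      omega
    constructor
    · rw [hn, Nat.add_mul_mod_self_left, Nat.mod_eq_of_lt hlt]
    · rw [hn, Nat.add_mul_div_left _ _ hI, Nat.div_eq_of_lt hlt, Nat.zero_add]

lemma Fcn_succ (I1 I2 n : ℕ) (h2 : 1 ≤ I2) :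
    Fcn I1 I2 (n+1) =
      Fcn I1 I2 n + (if (n+1) % (I1+I2) ∈ Finset.Icc 1 I1 then 0 else 1) := by
  have hI : 0 < I1 + I2 := by omega
  simp only [Finset.mem_Icc, Fcn]
  rcases succ_divmod (I1+I2) n hI with ⟨h1, h2'⟩ | ⟨h1, h2', h3⟩
  · rw [h1, h2']
    generalize n / (I1+I2) * I2 = K
    generalize n % (I1+I2) = r at *
    split <;> omega
  · rw [h1, h3, add_mul, one_mul]
    generalize n / (I1+I2) * I2 = K
    generalize n % (I1+I2) = r at *
    split <;> omega

lemma count_eq (I1 I2 : ℕ) (h2 : 1 ≤ I2) (n : ℕ) :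
    ((Finset.Icc 1 n).filter (fun l => ¬ l % (I1 + I2) ∈ Finset.Icc 1 I1)).card
      = Fcn I1 I2 n := by
  induction n with
  | zero => simp [Fcn]
  | succ n ih =>
    have hins : Finset.Icc 1 (n+1) = insert (n+1) (Finset.Icc 1 n) := by
      ext x; simp only [Finset.mem_Icc, Finset.mem_insert]; omega
    rw [hins, Finset.filter_insert, Fcn_succ I1 I2 n h2]
    by_cases h : (n+1) % (I1+I2) ∈ Finset.Icc 1 I1
    · rw [if_neg (not_not_intro h), if_pos h, ih, add_zero]
    · rw [if_pos h, if_neg h,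
        Finset.card_insert_of_notMem (by simp [Finset.mem_filter]), ih]

lemma count_Icc (I1 I2 : ℕ) (h2 : 1 ≤ I2) (s u : ℕ) (hs : 1 ≤ s) (hsu : s ≤ u + 1) :
    ((Finset.Icc s u).filter (fun l => ¬ l % (I1 + I2) ∈ Finset.Icc 1 I1)).card
      + Fcn I1 I2 (s-1) = Fcn I1 I2 u := by
  have hsplit : Finset.Icc 1 u = Finset.Icc 1 (s-1) ∪ Finset.Icc s u := by
    ext x; simp only [Finset.mem_Icc, Finset.mem_union]; omega
  have hdisj : Disjoint ((Finset.Icc 1 (s-1)).filter (fun l => ¬ l % (I1 + I2) ∈ Finset.Icc 1 I1))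
      ((Finset.Icc s u).filter (fun l => ¬ l % (I1 + I2) ∈ Finset.Icc 1 I1)) := by
    rw [Finset.disjoint_left]
    intro a ha hb
    simp only [Finset.mem_filter, Finset.mem_Icc] at ha hb
    omega
  have h1 := count_eq I1 I2 h2 u
  have h3 := count_eq I1 I2 h2 (s-1)
  rw [hsplit, Finset.filter_union, Finset.card_union_of_disjoint hdisj] at h1
  omega

lemma Fcn_mono (I1 I2 : ℕ) (h2 : 1 ≤ I2) {a u : ℕ} (h : a ≤ u) :
    Fcn I1 I2 a ≤ Fcn I1 I2 u := by
  have := count_Icc I1 I2 h2 (a+1) u (by omega) (by omega)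
  simp only [Nat.add_sub_cancel] at this
  omega

lemma level_top (I1 I2 : ℕ) (h2 : 1 ≤ I2) {a u : ℕ} (ha : a < u)
    (hF : Fcn I1 I2 a = Fcn I1 I2 u) :
    u % (I1+I2) ≤ I1 ∧ u - u % (I1+I2) ≤ a := by
  have hI : 0 < I1 + I2 := by omega
  simp only [Fcn] at hF
  have h1 : (I1+I2) * (a / (I1+I2)) + a % (I1+I2) = a := Nat.div_add_mod a (I1+I2)
  have h1u : (I1+I2) * (u / (I1+I2)) + u % (I1+I2) = u := Nat.div_add_mod u (I1+I2)
  have h2a : a % (I1+I2) < I1+I2 := Nat.mod_lt _ hI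
  have h2u : u % (I1+I2) < I1+I2 := Nat.mod_lt _ hI
  have hle : a / (I1+I2) ≤ u / (I1+I2) := Nat.div_le_div_right (le_of_lt ha)
  have hq : a / (I1+I2) = u / (I1+I2) := by
    rcases eq_or_lt_of_le hle with h | h
    · exact h
    · exfalso
      have hm : (a / (I1+I2) + 1) * I2 ≤ (u / (I1+I2)) * I2 :=
        Nat.mul_le_mul_right _ (by omega)
      rw [add_mul, one_mul] at hm
      generalize a / (I1+I2) * I2 = pa at *
      generalize u / (I1+I2) * I2 = pu at *
      omega
  rw [hq] at hF h1
  generalize u / (I1+I2) * I2 = pu at *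
  generalize (I1+I2) * (u / (I1+I2)) = M at *
  omega

lemma level_mem (I1 I2 : ℕ) (h2 : 1 ≤ I2) (v a : ℕ) (hFa : Fcn I1 I2 a = v) :
    v / I2 * (I1 + I2) + (if I2 ∣ v then 0 else I1 + v % I2) ≤ a ∧
    a ≤ v / I2 * (I1 + I2) + (if I2 ∣ v then 0 else I1 + v % I2)
        + (if I2 ∣ v then I1 else 0) := by
  have hI : 0 < I1 + I2 := by omega
  have h0 : 0 < I2 := h2
  simp only [Fcn] at hFa
  have h1 : (I1+I2) * (a / (I1+I2)) + a % (I1+I2) = a := Nat.div_add_mod a (I1+I2)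
  have h2a : a % (I1+I2) < I1+I2 := Nat.mod_lt _ hI
  have hx : a % (I1+I2) - I1 < I2 := by omega
  have hvd : v / I2 = a / (I1+I2) := by
    rw [← hFa, mul_comm, Nat.mul_add_div h0, Nat.div_eq_of_lt hx, add_zero]
  have hvm : v % I2 = a % (I1+I2) - I1 := by
    rw [← hFa, mul_comm (a / (I1+I2)) I2, Nat.mul_add_mod, Nat.mod_eq_of_lt hx]
  have hdvd : I2 ∣ v ↔ a % (I1+I2) - I1 = 0 := by
    rw [Nat.dvd_iff_mod_eq_zero, hvm]
  rw [hvd, hvm, mul_comm ((I1:ℕ)+I2) (a / (I1+I2))] at *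
  by_cases hd : I2 ∣ v
  · rw [if_pos hd, if_pos hd]
    have := hdvd.mp hd
    generalize a / (I1+I2) * (I1+I2) = M at *
    omega
  · rw [if_neg hd, if_neg hd]
    have := hdvd
    generalize a / (I1+I2) * (I1+I2) = M at *
    omega

lemma geomLe (q : ℝ) (hq0 : 0 ≤ q) (hq1 : q < 1) (n : ℕ) :
    ∑ k ∈ range n, q ^ k ≤ (1 - q)⁻¹ := by
  have h : (0:ℝ) < 1 - q := by linarith
  rw [geom_sum_eq hq1.ne]
  have he : (q ^ n - 1) / (q - 1) = (1 - q ^ n) / (1 - q) := by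
    rw [div_eq_div_iff (by linarith) (by linarith)]; ring
  rw [he, ← one_div]
  have hp : (0:ℝ) ≤ q ^ n := pow_nonneg hq0 n
  gcongr <;> linarith

lemma sumIccGeom (q : ℝ) (hq0 : 0 ≤ q) (hq1 : q < 1) (n : ℕ) :
    ∑ w ∈ Icc 1 n, q ^ w ≤ q * (1 - q)⁻¹ := by
  have h1 : Icc 1 n = Ico 1 (n+1) := by rw [Finset.Ico_add_one_right_eq_Icc]
  rw [h1, Finset.sum_Ico_eq_sum_range]
  simp only [add_tsub_cancel_right]
  have he : ∀ i, q ^ (1 + i) = q * q ^ i := fun i => by rw [pow_add, pow_one]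
  rw [Finset.sum_congr rfl fun i _ => he i, ← Finset.mul_sum]
  exact mul_le_mul_of_nonneg_left (geomLe q hq0 hq1 n) hq0

lemma dvdSumBound (I2 : ℕ) (h2 : 1 ≤ I2) (q : ℝ) (hq0 : 0 ≤ q) (hq1 : q < 1) (n : ℕ) :
    ∑ w ∈ (Icc 1 n).filter (fun w => I2 ∣ (n - w)), q ^ w
      ≤ q ^ (if I2 ∣ n then I2 else n % I2) * (1 - q ^ I2)⁻¹ := by
  have h0 : 0 < I2 := h2
  set r : ℕ := if I2 ∣ n then I2 else n % I2 with hr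
  have key : (Icc 1 n).filter (fun w => I2 ∣ (n - w)) ⊆
      (range n).image (fun k => r + k * I2) := by
    intro w hw
    simp only [Finset.mem_filter, Finset.mem_Icc] at hw
    obtain ⟨⟨hw1, hw2⟩, hdvd⟩ := hw
    have hmod : w % I2 = n % I2 := (Nat.modEq_iff_dvd' hw2).mpr hdvd
    simp only [Finset.mem_image, Finset.mem_range]
    by_cases hd : I2 ∣ n
    · have hwd : I2 ∣ w := by
        rw [Nat.dvd_iff_mod_eq_zero, hmod, ← Nat.dvd_iff_mod_eq_zero]; exact hd
    
      have hIw : I2 ≤ w := Nat.le_of_dvd (by omega) hwd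
      have e1 : w / I2 * I2 = w := Nat.div_mul_cancel hwd
      have hds : w / I2 ≤ w := Nat.div_le_self _ _
      refine ⟨w / I2 - 1, by omega, ?_⟩
      rw [hr, if_pos hd, Nat.sub_one_mul, e1]
      omega
    · have hr1 : 1 ≤ n % I2 := by
        rcases Nat.eq_zero_or_pos (n % I2) with h | h
        · exact absurd ((Nat.dvd_iff_mod_eq_zero).mpr h) hd
        · exact h
      have hds : w / I2 ≤ w := Nat.div_le_self _ _
      refine ⟨w / I2, ?_, ?_⟩
      · rcases Nat.lt_or_ge (w / I2) n with h | h
        · exact h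
        · exfalso
          have hw : w / I2 = w := by omega
          rcases (Nat.div_eq_self).mp hw with h' | h'
          · omega
          · exact hd (h' ▸ one_dvd n)
      · rw [hr, if_neg hd, ← hmod]
        exact Nat.mod_add_div' w I2
  have hinj : Set.InjOn (fun k => r + k * I2) (range n) := by
    intro i _ j _ h
    simp only at h
    exact Nat.eq_of_mul_eq_mul_right h0 (by omega)
  calc ∑ w ∈ (Icc 1 n).filter (fun w => I2 ∣ (n - w)), q ^ w
      ≤ ∑ w ∈ (range n).image (fun k => r + k * I2), q ^ w := by
        apply Finset.sum_le_sum_of_subset_of_nonneg key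
        intro i _ _; exact pow_nonneg hq0 _
    _ = ∑ k ∈ range n, q ^ (r + k * I2) := Finset.sum_image hinj
    _ = q ^ r * ∑ k ∈ range n, (q ^ I2) ^ k := by
        rw [Finset.mul_sum]
        refine Finset.sum_congr rfl fun k _ => ?_
        rw [pow_add, mul_comm k I2, pow_mul]
    _ ≤ q ^ r * (1 - q ^ I2)⁻¹ := by
        apply mul_le_mul_of_nonneg_left _ (pow_nonneg hq0 _)
        exact geomLe _ (pow_nonneg hq0 _) (pow_lt_one₀ hq0 hq1 (by omega)) n

lemma levelCard (I1 I2 : ℕ) (h2 : 1 ≤ I2) (v u : ℕ) :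
    ((range u).filter (fun a => Fcn I1 I2 a = v)).card ≤ if I2 ∣ v then I1 + 1 else 1 := by
  have hsub : (range u).filter (fun a => Fcn I1 I2 a = v) ⊆
      Finset.Icc (v / I2 * (I1 + I2) + (if I2 ∣ v then 0 else I1 + v % I2))
        (v / I2 * (I1 + I2) + (if I2 ∣ v then 0 else I1 + v % I2)
          + (if I2 ∣ v then I1 else 0)) := by
    intro a ha
    simp only [Finset.mem_filter, Finset.mem_range] at ha
    have := level_mem I1 I2 h2 v a ha.2
    rw [Finset.mem_Icc]
    exact this
  calc ((range u).filter (fun a => Fcn I1 I2 a = v)).card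
      ≤ _ := Finset.card_le_card hsub
    _ ≤ _ := by rw [Nat.card_Icc]; split <;> omega

lemma topCard (I1 I2 : ℕ) (h2 : 1 ≤ I2) (u : ℕ) :
    ((range u).filter (fun a => Fcn I1 I2 a = Fcn I1 I2 u)).card
      ≤ if u % (I1+I2) ≤ I1 then u % (I1+I2) else 0 := by
  have hsub : ((range u).filter (fun a => Fcn I1 I2 a = Fcn I1 I2 u)) ⊆
      Finset.Ico (u - (if u % (I1+I2) ≤ I1 then u % (I1+I2) else 0)) u := by
    intro a ha
    simp only [Finset.mem_filter, Finset.mem_range] at ha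
    have := level_top I1 I2 h2 ha.1 ha.2
    rw [Finset.mem_Ico]
    refine ⟨?_, ha.1⟩
    split <;> omega
  calc ((range u).filter (fun a => Fcn I1 I2 a = Fcn I1 I2 u)).card
      ≤ _ := Finset.card_le_card hsub
    _ = u - (u - (if u % (I1+I2) ≤ I1 then u % (I1+I2) else 0)) := Nat.card_Ico _ _
    _ ≤ _ := by split <;> omega

lemma FcnModFacts (I1 I2 : ℕ) (h2 : 1 ≤ I2) (u : ℕ) :
    Fcn I1 I2 u % I2 = u % (I1+I2) - I1 ∧ (I2 ∣ Fcn I1 I2 u ↔ u % (I1+I2) ≤ I1) := by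
  have hI : 0 < I1 + I2 := by omega
  have h2a : u % (I1+I2) < I1+I2 := Nat.mod_lt _ hI
  have hx : u % (I1+I2) - I1 < I2 := by omega
  have hm : Fcn I1 I2 u % I2 = u % (I1+I2) - I1 := by
    rw [Fcn, mul_comm (u / (I1+I2)) I2, Nat.mul_add_mod, Nat.mod_eq_of_lt hx]
  refine ⟨hm, ?_⟩
  rw [Nat.dvd_iff_mod_eq_zero, hm]
  omega

noncomputable def phiF (I1 I2 : ℕ) (q : ℝ) (j : ℕ) : ℝ :=
  (if j ≤ I1 then (j:ℝ) else 0) + q * (1-q)⁻¹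
    + I1 * (q ^ (if j ≤ I1 then I2 else j - I1) * (1 - q^I2)⁻¹)

lemma gBound (I1 I2 : ℕ) (h2 : 1 ≤ I2) (q : ℝ) (hq0 : 0 ≤ q) (hq1 : q < 1) (u : ℕ) :
    ∑ a ∈ range u, q ^ (Fcn I1 I2 u - Fcn I1 I2 a) ≤ phiF I1 I2 q (u % (I1+I2)) := by
  set n := Fcn I1 I2 u with hn
  rw [← Finset.sum_filter_add_sum_filter_not (range u) (fun a => Fcn I1 I2 a = n)]
  unfold phiF
  have hA : ∑ a ∈ (range u).filter (fun a => Fcn I1 I2 a = n), q ^ (n - Fcn I1 I2 a)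
      ≤ (if u % (I1+I2) ≤ I1 then ((u % (I1+I2) : ℕ):ℝ) else 0) := by
    have h1 : ∑ a ∈ (range u).filter (fun a => Fcn I1 I2 a = n), q ^ (n - Fcn I1 I2 a)
        = (((range u).filter (fun a => Fcn I1 I2 a = n)).card : ℝ) := by
      rw [Finset.sum_congr rfl (fun a ha => ?_), Finset.sum_const, nsmul_eq_mul, mul_one]
      have := (Finset.mem_filter.mp ha).2
      rw [this, Nat.sub_self, pow_zero]
    rw [h1]
    have h3 := topCard I1 I2 h2 u
    have : ((((range u).filter (fun a => Fcn I1 I2 a = n)).card : ℕ):ℝ)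
        ≤ (((if u % (I1+I2) ≤ I1 then u % (I1+I2) else 0 : ℕ)):ℝ) := by
      exact_mod_cast h3
    refine this.trans ?_
    split <;> simp
  have hB : ∑ a ∈ (range u).filter (fun a => ¬ Fcn I1 I2 a = n), q ^ (n - Fcn I1 I2 a)
      ≤ q * (1-q)⁻¹
        + I1 * (q ^ (if u % (I1+I2) ≤ I1 then I2 else u % (I1+I2) - I1) * (1 - q^I2)⁻¹) := by
    have hmt : ∀ a ∈ (range u).filter (fun a => ¬ Fcn I1 I2 a = n),
        n - Fcn I1 I2 a ∈ Finset.Icc 1 n := by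
      intro a ha
      simp only [Finset.mem_filter, Finset.mem_range] at ha
      have := Fcn_mono I1 I2 h2 (le_of_lt ha.1)
      rw [Finset.mem_Icc]
      omega
    rw [← Finset.sum_fiberwise_of_maps_to hmt (fun a => q ^ (n - Fcn I1 I2 a))]
    have hinner : ∀ w ∈ Finset.Icc 1 n,
        ∑ a ∈ ((range u).filter (fun a => ¬ Fcn I1 I2 a = n)).filter
            (fun a => n - Fcn I1 I2 a = w), q ^ (n - Fcn I1 I2 a)
          ≤ ((if I2 ∣ (n - w) then I1 + 1 else 1 : ℕ) : ℝ) * q ^ w := by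
      intro w hw
      rw [Finset.mem_Icc] at hw
      have h1 : ∑ a ∈ ((range u).filter (fun a => ¬ Fcn I1 I2 a = n)).filter
            (fun a => n - Fcn I1 I2 a = w), q ^ (n - Fcn I1 I2 a)
          = (( ((range u).filter (fun a => ¬ Fcn I1 I2 a = n)).filter
            (fun a => n - Fcn I1 I2 a = w)).card : ℝ) * q ^ w := by
        rw [Finset.sum_congr rfl (fun a ha => ?_), Finset.sum_const, nsmul_eq_mul]
        have := (Finset.mem_filter.mp ha).2
        rw [this]
      rw [h1]
      apply mul_le_mul_of_nonneg_right _ (pow_nonneg hq0 _)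
      have hsub : ((range u).filter (fun a => ¬ Fcn I1 I2 a = n)).filter
            (fun a => n - Fcn I1 I2 a = w) ⊆
          (range u).filter (fun a => Fcn I1 I2 a = n - w) := by
        intro a ha
        simp only [Finset.mem_filter, Finset.mem_range] at ha ⊢
        have hmo := Fcn_mono I1 I2 h2 (le_of_lt ha.1.1)
        exact ⟨ha.1.1, by omega⟩
      have := (Finset.card_le_card hsub).trans (levelCard I1 I2 h2 (n - w) u)
      exact_mod_cast this
    refine (Finset.sum_le_sum hinner).trans ?_
    have hsplit : ∀ w : ℕ, ((if I2 ∣ (n - w) then I1 + 1 else 1 : ℕ) : ℝ) * q ^ w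
        = q ^ w + (I1:ℝ) * (if I2 ∣ (n - w) then q ^ w else 0) := by
      intro w
      split <;> push_cast <;> ring
    rw [Finset.sum_congr rfl (fun w _ => hsplit w), Finset.sum_add_distrib]
    apply add_le_add (sumIccGeom q hq0 hq1 n)
    rw [← Finset.mul_sum, ← Finset.sum_filter]
    apply mul_le_mul_of_nonneg_left _ (by positivity)
    refine (dvdSumBound I2 h2 q hq0 hq1 n).trans ?_
    have hconv : (if I2 ∣ n then I2 else n % I2)
        = (if u % (I1+I2) ≤ I1 then I2 else u % (I1+I2) - I1) := by
      obtain ⟨hm, hd⟩ := FcnModFacts I1 I2 h2 u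
      by_cases hcase : u % (I1+I2) ≤ I1
      · rw [if_pos hcase, if_pos (hd.mpr hcase)]
      · rw [if_neg hcase, if_neg (fun h => hcase (hd.mp h)), hn, hm]
    rw [hconv]
  calc _ ≤ _ := add_le_add hA hB
    _ = _ := by push_cast; ring

lemma sumMod (f : ℕ → ℝ) (I : ℕ) (hI : 0 < I) (m : ℕ) :
    ∑ u ∈ range (m * I), f (u % I) = m * ∑ j ∈ range I, f j := by
  induction m with
  | zero => simp
  | succ m ih =>
    have h1 : (m + 1) * I = m * I + I := by ring
    rw [h1, Finset.range_eq_Ico,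
      ← Finset.sum_Ico_consecutive _ (Nat.zero_le (m * I)) (Nat.le_add_right _ _),
      ← Finset.range_eq_Ico, ih, Finset.sum_Ico_eq_sum_range]
    simp only [Nat.add_sub_cancel_left]
    have h2 : ∀ i ∈ range I, f ((m * I + i) % I) = f i := by
      intro i hi
      rw [Nat.add_comm, Nat.add_mul_mod_self_right, Nat.mod_eq_of_lt (Finset.mem_range.mp hi)]
    rw [Finset.sum_congr rfl h2]
    push_cast
    ring

lemma blockSum (I1 I2 : ℕ) (h2 : 1 ≤ I2) (q : ℝ) (hq0 : 0 ≤ q) (hq1 : q < 1) :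
    ∑ j ∈ range (I1+I2), phiF I1 I2 q j ≤
      (I1:ℝ)*(I1+1)/2 + ((I1:ℝ)+I2)*(q*(1-q)⁻¹)
        + (I1:ℝ)*(1-q^I2)⁻¹*((I1:ℝ)*q^I2 + q*(1-q^I2)*(1-q)⁻¹) := by
  unfold phiF
  rw [Finset.sum_add_distrib, Finset.sum_add_distrib]
  have e1 : ∑ j ∈ range (I1+I2), (if j ≤ I1 then (j:ℝ) else 0) = (I1:ℝ)*(I1+1)/2 := by
    rw [Finset.range_eq_Ico,
      ← Finset.sum_Ico_consecutive _ (Nat.zero_le (I1+1)) (by omega : I1+1 ≤ I1+I2)]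
    have ha : ∑ j ∈ Finset.Ico 0 (I1+1), (if j ≤ I1 then (j:ℝ) else 0)
        = ∑ j ∈ Finset.Ico 0 (I1+1), (j:ℝ) := by
      refine Finset.sum_congr rfl fun j hj => ?_
      rw [Finset.mem_Ico] at hj
      rw [if_pos (by omega)]
    have hb : ∑ j ∈ Finset.Ico (I1+1) (I1+I2), (if j ≤ I1 then (j:ℝ) else 0) = 0 := by
      refine Finset.sum_eq_zero fun j hj => ?_
      rw [Finset.mem_Ico] at hj
      rw [if_neg (by omega)]
    rw [ha, hb, add_zero, ← Finset.range_eq_Ico]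
    have hnat : (∑ i ∈ range (I1+1), i) * 2 = (I1+1) * I1 := by
      simpa using Finset.sum_range_id_mul_two (I1+1)
    have hcast : (∑ x ∈ range (I1+1), (x:ℝ)) * 2 = ((I1:ℝ)+1) * I1 := by
      have := congrArg (Nat.cast : ℕ → ℝ) hnat
      push_cast at this
      convert this using 2
    linarith [hcast]
  have e2 : ∑ _j ∈ range (I1+I2), q * (1-q)⁻¹ = ((I1:ℝ)+I2) * (q*(1-q)⁻¹) := by
    rw [Finset.sum_const, Finset.card_range, nsmul_eq_mul]
    push_cast
    ring
  have e3 : ∑ j ∈ range (I1+I2),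
      (I1:ℝ) * (q ^ (if j ≤ I1 then I2 else j - I1) * (1 - q^I2)⁻¹)
      ≤ (I1:ℝ)*(1-q^I2)⁻¹*((I1:ℝ)*q^I2 + q*(1-q^I2)*(1-q)⁻¹) := by
    have hy1 : q ^ I2 < 1 := pow_lt_one₀ hq0 hq1 (by omega)
    have hy0 : (0:ℝ) < 1 - q ^ I2 := by linarith
    have hfact : ∑ j ∈ range (I1+I2),
        (I1:ℝ) * (q ^ (if j ≤ I1 then I2 else j - I1) * (1 - q^I2)⁻¹)
        = (I1:ℝ) * (1-q^I2)⁻¹ * ∑ j ∈ range (I1+I2), q ^ (if j ≤ I1 then I2 else j - I1) := by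
      rw [Finset.mul_sum]
      exact Finset.sum_congr rfl fun j _ => by ring
    rw [hfact]
    apply mul_le_mul_of_nonneg_left _ (by positivity)
    rw [Finset.range_eq_Ico,
      ← Finset.sum_Ico_consecutive _ (Nat.zero_le (I1+1)) (by omega : I1+1 ≤ I1+I2)]
    have ha : ∑ j ∈ Finset.Ico 0 (I1+1), q ^ (if j ≤ I1 then I2 else j - I1)
        = ((I1:ℝ)+1) * q ^ I2 := by
      have hc : ∀ j ∈ Finset.Ico 0 (I1+1),
          q ^ (if j ≤ I1 then I2 else j - I1) = q ^ I2 := by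
        intro j hj
        rw [Finset.mem_Ico] at hj
        rw [if_pos (by omega)]
      rw [Finset.sum_congr rfl hc, Finset.sum_const, nsmul_eq_mul, Nat.card_Ico]
      push_cast
      ring
    have hb : ∑ j ∈ Finset.Ico (I1+1) (I1+I2), q ^ (if j ≤ I1 then I2 else j - I1)
        = q * ∑ i ∈ range (I2-1), q ^ i := by
      rw [Finset.sum_Ico_eq_sum_range, show I1+I2-(I1+1) = I2-1 from by omega]
      have hc : ∀ i, (if I1+1+i ≤ I1 then I2 else I1+1+i - I1) = 1 + i := fun i => by
        rw [if_neg (by omega)]; omega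
      rw [Finset.sum_congr rfl (fun i _ => by rw [hc i, pow_add, pow_one]),
        ← Finset.mul_sum]
    rw [ha, hb]
    have hq : (1:ℝ) - q ≠ 0 := fun h => hq1.ne (by linarith)
    have hq' : q - 1 ≠ 0 := fun h => hq1.ne (by linarith)
    have h3' : (1-q) * ∑ i ∈ range I2, q ^ i = 1 - q ^ I2 := by
      rw [geom_sum_eq hq1.ne]
      field_simp
      ring
    have h4' : ∑ i ∈ range I2, q ^ i = (1 - q^I2) * (1-q)⁻¹ := by
      rw [← h3', mul_comm (1-q) _, mul_assoc, mul_inv_cancel₀ hq, mul_one]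
    have h5 : ∑ i ∈ range I2, q^i = ∑ i ∈ range (I2-1), q^i + q^(I2-1) := by
      have hstep : I2 - 1 + 1 = I2 := by omega
      conv_lhs => rw [← hstep]
      rw [Finset.sum_range_succ]
    have h6 : q * q^(I2-1) = q^I2 := by
      rw [← pow_succ']
      congr 1
      omega
    have hgeo : q^I2 + q * ∑ i ∈ range (I2-1), q ^ i = q * (1-q^I2) * (1-q)⁻¹ := by
      have := h4'
      rw [h5] at this
      calc q^I2 + q * ∑ i ∈ range (I2-1), q ^ i
          = q * (∑ i ∈ range (I2-1), q^i + q^(I2-1)) := by rw [mul_add, h6]; ring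
        _ = q * ((1 - q^I2) * (1-q)⁻¹) := by rw [this]
        _ = q * (1-q^I2) * (1-q)⁻¹ := by ring
    linarith [hgeo]
  rw [e1, e2]
  exact add_le_add le_rfl e3

/-- `ρ_{s,t-1}` for the update scheme `I_T¹ = {t : t mod (I₁+I₂) ∉ [I₁]}`:
equal to `ρ ^ |[s:t-1] ∩ I_T¹|` when `s < t`, and `1` when `s ≥ t`. -/
noncomputable def rhoOne (ρ : ℝ) (I1 I2 s t : ℕ) : ℝ :=
  if s < t then
    ρ ^ ((Finset.Icc s (t - 1)).filter
      (fun l => ¬ l % (I1 + I2) ∈ Finset.Icc 1 I1)).card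
  else 1

/-- `A_T` for the scheme `I_T¹`. -/
noncomputable def ATone (ρ : ℝ) (I1 I2 T : ℕ) : ℝ :=
  (T : ℝ)⁻¹ * ∑ t ∈ Finset.Icc 1 T, ∑ s ∈ Finset.Icc 1 (t - 1), (rhoOne ρ I1 I2 s t) ^ 2

/-- **Theorem (bound on `A_T` for the scheme `I_T¹`).**
For `S = {t : t mod I ∉ [I₁]}` with `I = I₁+I₂` and `T = (R+1)·I`,
`A_T ≤ (1/(2I))·(((1+ρ^{2I₂})/(1−ρ^{2I₂}))·I₁² + ((1+ρ²)/(1−ρ²))·I₁) + ρ²/(1−ρ²)`. -/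
theorem scheme_one_AT_bound
    (ρ : ℝ) (hρ0 : 0 ≤ ρ) (hρ1 : ρ < 1)
    (I1 I2 : ℕ) (hI2 : 1 ≤ I2)
    (T R : ℕ) (hT : T = (R + 1) * (I1 + I2)) :
    ATone ρ I1 I2 T ≤
      (2 * ((I1 : ℝ) + I2))⁻¹ *
          ((1 + ρ ^ (2 * I2)) / (1 - ρ ^ (2 * I2)) * (I1 : ℝ) ^ 2 +
            (1 + ρ ^ 2) / (1 - ρ ^ 2) * (I1 : ℝ)) +
        ρ ^ 2 / (1 - ρ ^ 2) := by
  have hI : 0 < I1 + I2 := by omega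
  have hq0 : (0:ℝ) ≤ ρ ^ 2 := by positivity
  have hq1 : ρ ^ 2 < 1 := pow_lt_one₀ hρ0 hρ1 (by norm_num)
  have hy1 : (ρ^2) ^ I2 < 1 := pow_lt_one₀ hq0 hq1 (by omega)
  have hy0r : (0:ℝ) < 1 - (ρ^2)^I2 := by linarith
  have hq0r : (0:ℝ) < 1 - ρ^2 := by linarith
  have hsum : ∑ t ∈ Finset.Icc 1 T, ∑ s ∈ Finset.Icc 1 (t - 1), (rhoOne ρ I1 I2 s t) ^ 2
      = ∑ u ∈ range T, ∑ a ∈ range u, (ρ^2) ^ (Fcn I1 I2 u - Fcn I1 I2 a) := by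
    rw [show Finset.Icc 1 T = Finset.Ico 1 (T+1) from by rw [Finset.Ico_add_one_right_eq_Icc],
      Finset.sum_Ico_eq_sum_range]
    simp only [Nat.add_sub_cancel]
    refine Finset.sum_congr rfl fun u _ => ?_
    rw [show (1+u) - 1 = u from by omega]
    rw [show Finset.Icc 1 u = Finset.Ico 1 (u+1) from by rw [Finset.Ico_add_one_right_eq_Icc],
      Finset.sum_Ico_eq_sum_range]
    simp only [Nat.add_sub_cancel]
    refine Finset.sum_congr rfl fun a ha => ?_
    rw [Finset.mem_range] at ha
    rw [rhoOne, if_pos (by omega)]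
    rw [show (1+u) - 1 = u from by omega]
    have hc := count_Icc I1 I2 hI2 (1+a) u (by omega) (by omega)
    rw [show (1+a) - 1 = a from by omega] at hc
    rw [show ((Finset.Icc (1+a) u).filter (fun l => ¬ l % (I1 + I2) ∈ Finset.Icc 1 I1)).card
        = Fcn I1 I2 u - Fcn I1 I2 a from by omega]
    rw [← pow_mul, mul_comm, pow_mul]
  have hstep2 : ∑ u ∈ range T, ∑ a ∈ range u, (ρ^2) ^ (Fcn I1 I2 u - Fcn I1 I2 a)
      ≤ ((R:ℝ)+1) * ∑ j ∈ range (I1+I2), phiF I1 I2 (ρ^2) j := by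
    calc ∑ u ∈ range T, ∑ a ∈ range u, (ρ^2) ^ (Fcn I1 I2 u - Fcn I1 I2 a)
        ≤ ∑ u ∈ range T, phiF I1 I2 (ρ^2) (u % (I1+I2)) :=
          Finset.sum_le_sum fun u _ => gBound I1 I2 hI2 (ρ^2) hq0 hq1 u
      _ = ((R:ℝ)+1) * ∑ j ∈ range (I1+I2), phiF I1 I2 (ρ^2) j := by
          rw [hT, sumMod (phiF I1 I2 (ρ^2)) (I1+I2) hI (R+1)]
          push_cast
          ring
  set B : ℝ := (I1:ℝ)*(I1+1)/2 + ((I1:ℝ)+I2)*((ρ^2)*(1-ρ^2)⁻¹)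
        + (I1:ℝ)*(1-(ρ^2)^I2)⁻¹*((I1:ℝ)*(ρ^2)^I2 + (ρ^2)*(1-(ρ^2)^I2)*(1-ρ^2)⁻¹)
    with hBdef
  have hstep3 : ((R:ℝ)+1) * ∑ j ∈ range (I1+I2), phiF I1 I2 (ρ^2) j ≤ ((R:ℝ)+1) * B :=
    mul_le_mul_of_nonneg_left (blockSum I1 I2 hI2 (ρ^2) hq0 hq1) (by positivity)
  have hTpos : (0:ℝ) < (T:ℝ) := by
    have : 0 < T := by rw [hT]; exact Nat.mul_pos (by omega) hI
    exact_mod_cast this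
  rw [ATone, hsum]
  calc (T:ℝ)⁻¹ * ∑ u ∈ range T, ∑ a ∈ range u, (ρ^2) ^ (Fcn I1 I2 u - Fcn I1 I2 a)
      ≤ (T:ℝ)⁻¹ * (((R:ℝ)+1) * B) :=
        mul_le_mul_of_nonneg_left (hstep2.trans hstep3) (inv_nonneg.mpr hTpos.le)
    _ = _ := by
        have hTr : (T:ℝ) = ((R:ℝ)+1) * ((I1:ℝ)+I2) := by rw [hT]; push_cast; ring
        have hR1 : ((R:ℝ)+1) ≠ 0 := by positivity
        have hIne : ((I1:ℝ)+I2) ≠ 0 := by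
          have : (0:ℝ) < (I1:ℝ)+I2 := by exact_mod_cast hI
          linarith
        rw [hTr, hBdef, pow_mul ρ 2 I2]
        field_simp
        ring
end

section
/- For the update scheme I_T^1, i.e., S = {t ∈ ℕ : t mod I ∉ {1,…,I_1}} with I = I_1 + I_2, and T = (R+1)·I for some integer R ≥ 0, one has max{B_T, C_T} ≤ K², where K = I_1/(1−ρ^{I_2}) + ρ/(1−ρ). -/
open Finset

/-- `B_T` for the scheme `I_T¹`. -/
noncomputable def BTone (ρ : ℝ) (I1 I2 T : ℕ) : ℝ :=
  (T : ℝ)⁻¹ * ∑ t ∈ Finset.Icc 1 T, (∑ s ∈ Finset.Icc 1 (t - 1), rhoOne ρ I1 I2 s t) ^ 2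

/-- `C_T` for the scheme `I_T¹`. -/
noncomputable def CTone (ρ : ℝ) (I1 I2 T : ℕ) : ℝ :=
  ⨆ s ∈ Finset.Icc 1 (T - 1),
    ∑ t ∈ Finset.Icc (s + 1) T,
      rhoOne ρ I1 I2 s t * ∑ l ∈ Finset.Icc 1 (t - 1), rhoOne ρ I1 I2 l t

/-- count of "damped" indices in `[a, b)`. -/
def cQ (I1 I2 a b : ℕ) : ℕ :=
  ((Finset.Ico a b).filter (fun l => ¬ l % (I1 + I2) ∈ Finset.Icc 1 I1)).card

lemma mod_ne {I u v : ℕ} (h1 : u < v) (h2 : v < u + I) : u % I ≠ v % I := by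
  intro h
  have hd : I ∣ v - u := (Nat.modEq_iff_dvd' h1.le).mp h
  have := Nat.le_of_dvd (by omega) hd
  omega

lemma cQ_add (I1 I2 : ℕ) {a b c : ℕ} (h1 : a ≤ b) (h2 : b ≤ c) :
    cQ I1 I2 a b + cQ I1 I2 b c = cQ I1 I2 a c := by
  unfold cQ
  rw [← card_union_of_disjoint (disjoint_filter_filter (Ico_disjoint_Ico_consecutive a b c)),
    ← filter_union, Ico_union_Ico_eq_Ico h1 h2]

lemma range_filter_not_card (I1 I2 : ℕ) (hI2 : 1 ≤ I2) :
    ((range (I1+I2)).filter (fun r => ¬ r ∈ Icc 1 I1)).card = I2 := by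
  have h := card_filter_add_card_filter_not (s := range (I1+I2))
    (p := fun r => r ∈ Icc 1 I1)
  have h2 : (range (I1+I2)).filter (fun r => r ∈ Icc 1 I1) = Icc 1 I1 := by
    ext r
    simp only [mem_filter, mem_range, mem_Icc]
    omega
  rw [h2] at h
  simp only [Nat.card_Icc, card_range] at h
  omega

lemma cQ_as_sum (I1 I2 a b : ℕ) :
    cQ I1 I2 a b = ∑ l ∈ Ico a b, (if ¬ l % (I1+I2) ∈ Icc 1 I1 then 1 else 0) := by
  rw [cQ, card_filter]

lemma cQ_period (I1 I2 : ℕ) (hI2 : 1 ≤ I2) (s : ℕ) :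
    cQ I1 I2 s (s + (I1+I2)) = I2 := by
  set g : ℕ → ℕ := fun l => if ¬ l % (I1+I2) ∈ Icc 1 I1 then 1 else 0 with hgdef
  have hg : ∀ l, g (l + (I1+I2)) = g l := by
    intro l
    simp only [hgdef, Nat.add_mod_right]
  have hsum : ∀ u, cQ I1 I2 u (u + (I1+I2)) = ∑ k ∈ range (I1+I2), g (u + k) := by
    intro u
    rw [cQ_as_sum, Finset.sum_Ico_eq_sum_range, Nat.add_sub_cancel_left]
  induction s with
  | zero =>
    rw [cQ_as_sum]
    have : Ico 0 (0 + (I1+I2)) = range (I1+I2) := by rw [zero_add, range_eq_Ico]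
    rw [this]
    have hcong : ∀ l ∈ range (I1+I2),
        (if ¬ l % (I1+I2) ∈ Icc 1 I1 then 1 else 0) = (if ¬ l ∈ Icc 1 I1 then (1:ℕ) else 0) := by
      intro l hl
      rw [Nat.mod_eq_of_lt (mem_range.mp hl)]
    rw [Finset.sum_congr rfl hcong, ← card_filter]
    exact range_filter_not_card I1 I2 hI2
  | succ n ih =>
    rw [hsum] at ih ⊢
    have h1 := Finset.sum_range_succ' (fun k => g (n + k)) (I1+I2)
    have h2 := Finset.sum_range_succ (fun k => g (n + k)) (I1+I2)
    have h3 : g (n + (I1+I2)) = g (n + 0) := by rw [add_zero, hg]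
    have h4 : ∑ k ∈ range (I1+I2), g (n + 1 + k) = ∑ k ∈ range (I1+I2), g (n + (k + 1)) :=
      Finset.sum_congr rfl (fun k _ => by rw [show n+1+k = n+(k+1) from by omega])
    omega

lemma cQ_period_mul (I1 I2 : ℕ) (hI2 : 1 ≤ I2) (q s : ℕ) :
    cQ I1 I2 s (s + q*(I1+I2)) = q * I2 := by
  induction q with
  | zero => simp [cQ]
  | succ n ih =>
    have hb : s + (n+1)*(I1+I2) = (s + n*(I1+I2)) + (I1+I2) := by ring
    rw [hb, ← cQ_add I1 I2 (Nat.le_add_right _ _) (Nat.le_add_right _ _), ih,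
      cQ_period I1 I2 hI2]
    ring

lemma per_period (ρ : ℝ) (hρ0 : 0 ≤ ρ) (hρ1 : ρ < 1) (P : ℕ → Prop) [DecidablePred P]
    (m I1 I2 : ℕ)
    (hP : ((Icc 1 m).filter P).card ≤ I2)
    (hnP : ((Icc 1 m).filter (fun i => ¬ P i)).card ≤ I1) :
    ∑ i ∈ Icc 1 m, ρ ^ ((Icc 1 i).filter P).card ≤ (I1:ℝ) + ∑ k ∈ Icc 1 I2, ρ ^ k := by
  have hsplit := Finset.sum_filter_add_sum_filter_not (Icc 1 m) P
    (fun i => ρ ^ ((Icc 1 i).filter P).card)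
  set c : ℕ → ℕ := fun i => ((Icc 1 i).filter P).card with hc
  have hmono : ∀ i j, i ∈ (Icc 1 m).filter P → j ∈ (Icc 1 m).filter P → i < j → c i < c j := by
    intro i j hi hj hij
    simp only [mem_filter, mem_Icc] at hi hj
    have hsub : insert j ((Icc 1 i).filter P) ⊆ (Icc 1 j).filter P := by
      intro x hx
      rcases mem_insert.mp hx with rfl | hx
      · exact mem_filter.mpr ⟨mem_Icc.mpr ⟨hj.1.1, le_refl _⟩, hj.2⟩
      · simp only [mem_filter, mem_Icc] at hx ⊢
        exact ⟨⟨hx.1.1, hx.1.2.trans hij.le⟩, hx.2⟩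
    have hj' : j ∉ (Icc 1 i).filter P := by
      intro h
      have := (mem_Icc.mp (mem_filter.mp h).1).2
      omega
    have hcard := card_le_card hsub
    rw [card_insert_of_notMem hj'] at hcard
    simp only [hc]
    omega
  have h1 : ∑ i ∈ (Icc 1 m).filter P, ρ ^ c i ≤ ∑ k ∈ Icc 1 I2, ρ ^ k := by
    have hinj : ∀ x ∈ (Icc 1 m).filter P, ∀ y ∈ (Icc 1 m).filter P, c x = c y → x = y := by
      intro x hx y hy hxy
      rcases lt_trichotomy x y with h|h|h
      · exact absurd hxy (hmono x y hx hy h).ne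
      · exact h
      · exact absurd hxy.symm (hmono y x hy hx h).ne
    rw [← Finset.sum_image hinj]
    apply Finset.sum_le_sum_of_subset_of_nonneg
    · intro k hk
      obtain ⟨i, hi, rfl⟩ := mem_image.mp hk
      have hi' := mem_filter.mp hi
      have h1i := (mem_Icc.mp hi'.1).1
      have him := (mem_Icc.mp hi'.1).2
      refine mem_Icc.mpr ⟨?_, ?_⟩
      · have : i ∈ (Icc 1 i).filter P :=
          mem_filter.mpr ⟨mem_Icc.mpr ⟨h1i, le_refl i⟩, hi'.2⟩
        exact card_pos.mpr ⟨i, this⟩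
      · calc c i ≤ ((Icc 1 m).filter P).card :=
              card_le_card (filter_subset_filter _ (Icc_subset_Icc_right him))
          _ ≤ I2 := hP
    · intro k _ _
      exact pow_nonneg hρ0 k
  have h2 : ∑ i ∈ (Icc 1 m).filter (fun i => ¬ P i), ρ ^ c i ≤ (I1:ℝ) := by
    calc ∑ i ∈ (Icc 1 m).filter (fun i => ¬ P i), ρ ^ c i
        ≤ ((Icc 1 m).filter (fun i => ¬P i)).card • (1:ℝ) :=
          sum_le_card_nsmul _ _ _ (fun x _ => pow_le_one₀ hρ0 hρ1.le)
      _ = (((Icc 1 m).filter (fun i => ¬P i)).card : ℝ) := by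
          rw [nsmul_eq_mul, mul_one]
      _ ≤ (I1 : ℝ) := Nat.cast_le.mpr hnP
  linarith [hsplit]

lemma assembly (ρ : ℝ) (hρ0 : 0 ≤ ρ) (e : ℕ → ℕ) (I I2 R L : ℕ) (hI : 0 < I)
    (hL : L ≤ (R+1)*I)
    (he : ∀ q i, 1 ≤ i → i ≤ I → q*I + i ≤ L → e (q*I + i) = q*I2 + e i) :
    ∑ j ∈ Icc 1 L, ρ ^ (e j) ≤
      (∑ q ∈ range (R+1), (ρ^I2)^q) * ∑ i ∈ Icc 1 (min I L), ρ^(e i) := by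
  classical
  set f : ℕ × ℕ → ℝ := fun p => (ρ^I2)^p.1 * ρ^(e p.2) with hf
  set ψ : ℕ → ℕ × ℕ := fun j => ((j-1)/I, (j-1)%I + 1) with hψ
  have hdecomp : ∀ j, 1 ≤ j → (j-1)/I * I + ((j-1)%I + 1) = j := by
    intro j hj
    have hdm := Nat.div_add_mod (j-1) I
    rw [mul_comm ((j-1)/I) I]
    omega
  have hval : ∀ j ∈ Icc 1 L, ρ^(e j) = f (ψ j) := by
    intro j hj
    obtain ⟨hj1, hjL⟩ := mem_Icc.mp hj
    have hd := hdecomp j hj1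
    have hmod : (j-1) % I < I := Nat.mod_lt _ hI
    have hee := he ((j-1)/I) ((j-1)%I+1) (by omega) (by omega) (by omega)
    simp only [hf, hψ]
    calc ρ^(e j) = ρ^(e ((j-1)/I * I + ((j-1)%I + 1))) := by rw [hd]
      _ = ρ^((j-1)/I * I2 + e ((j-1)%I + 1)) := by rw [hee]
      _ = (ρ^I2)^((j-1)/I) * ρ^(e ((j-1)%I + 1)) := by
          rw [pow_add, mul_comm ((j-1)/I) I2, pow_mul]
  have hinj : ∀ x ∈ Icc 1 L, ∀ y ∈ Icc 1 L, ψ x = ψ y → x = y := by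
    intro x hx y hy hxy
    obtain ⟨hx1, _⟩ := mem_Icc.mp hx
    obtain ⟨hy1, _⟩ := mem_Icc.mp hy
    have h1 : (x-1)/I = (y-1)/I := congrArg Prod.fst hxy
    have h2 : (x-1)%I + 1 = (y-1)%I + 1 := congrArg Prod.snd hxy
    have h3 : (x-1)/I * I + ((x-1)%I + 1) = y := by rw [h1, h2]; exact hdecomp y hy1
    have h4 := hdecomp x hx1
    omega
  calc ∑ j ∈ Icc 1 L, ρ^(e j)
      = ∑ j ∈ Icc 1 L, f (ψ j) := Finset.sum_congr rfl hval
    _ = ∑ p ∈ (Icc 1 L).image ψ, f p := (Finset.sum_image hinj).symm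
    _ ≤ ∑ p ∈ (range (R+1)) ×ˢ (Icc 1 (min I L)), f p := by
        apply Finset.sum_le_sum_of_subset_of_nonneg
        · intro p hp
          obtain ⟨j, hj, rfl⟩ := mem_image.mp hp
          obtain ⟨hj1, hjL⟩ := mem_Icc.mp hj
          have hmod : (j-1) % I < I := Nat.mod_lt _ hI
          have hmod2 : (j-1) % I ≤ j - 1 := Nat.mod_le _ _
          have hd := hdecomp j hj1
          have hdiv : (j-1)/I < R+1 := by
            rw [Nat.div_lt_iff_lt_mul hI]
            omega
          simp only [hψ]
          refine mem_product.mpr ⟨mem_range.mpr hdiv, mem_Icc.mpr ⟨by omega, ?_⟩⟩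
          refine le_min (by omega) (by omega)
        · intro p _ _
          exact mul_nonneg (pow_nonneg (pow_nonneg hρ0 _) _) (pow_nonneg hρ0 _)
    _ = (∑ q ∈ range (R+1), (ρ^I2)^q) * ∑ i ∈ Icc 1 (min I L), ρ^(e i) := by
        rw [Finset.sum_mul_sum]
        rw [Finset.sum_product]


lemma rhoOne_eq (ρ : ℝ) (I1 I2 : ℕ) {s t : ℕ} (h : s < t) :
    rhoOne ρ I1 I2 s t = ρ ^ cQ I1 I2 s t := by
  have hIcc : Icc s (t-1) = Ico s t := by
    rw [← Finset.Ico_add_one_right_eq_Icc]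
    congr 1
    omega
  rw [rhoOne, if_pos h, cQ, hIcc]

lemma rhoOne_nonneg (ρ : ℝ) (hρ0 : 0 ≤ ρ) (I1 I2 s t : ℕ) : 0 ≤ rhoOne ρ I1 I2 s t := by
  rw [rhoOne]
  split_ifs
  · exact pow_nonneg hρ0 _
  · exact zero_le_one

lemma row_bound (ρ : ℝ) (hρ0 : 0 ≤ ρ) (hρ1 : ρ < 1) (I1 I2 : ℕ) (hI2 : 1 ≤ I2)
    (R t : ℕ) (ht : t ≤ (R+1)*(I1+I2)) :
    ∑ s ∈ Icc 1 (t-1), rhoOne ρ I1 I2 s t ≤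
      (∑ q ∈ range (R+1), (ρ^I2)^q) * ((I1:ℝ) + ∑ k ∈ Icc 1 I2, ρ^k) := by
  have hI : 0 < I1 + I2 := by omega
  have hre : ∑ s ∈ Icc 1 (t-1), rhoOne ρ I1 I2 s t
      = ∑ j ∈ Icc 1 (t-1), ρ ^ (cQ I1 I2 (t-j) t) := by
    refine Finset.sum_nbij' (fun s => t - s) (fun j => t - j) ?_ ?_ ?_ ?_ ?_
    · intro a ha
      simp only [mem_Icc] at ha ⊢
      omega
    · intro a ha
      simp only [mem_Icc] at ha ⊢
      omega
    · intro a ha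
      simp only [mem_Icc] at ha
      show t - (t - a) = a
      omega
    · intro a ha
      simp only [mem_Icc] at ha
      show t - (t - a) = a
      omega
    · intro s hs
      simp only [mem_Icc] at hs
      show rhoOne ρ I1 I2 s t = ρ ^ cQ I1 I2 (t - (t - s)) t
      rw [rhoOne_eq ρ I1 I2 (by omega : s < t)]
      have hss : t - (t - s) = s := by omega
      rw [hss]
  rw [hre]
  have hhe : ∀ q i, 1 ≤ i → i ≤ I1+I2 → q*(I1+I2) + i ≤ t-1 →
      cQ I1 I2 (t - (q*(I1+I2)+i)) t = q*I2 + cQ I1 I2 (t-i) t := by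
    intro q i h1 hiI hle
    set a := t - (q*(I1+I2)+i) with ha
    have h1a : t - i = a + q*(I1+I2) := by omega
    have h3 := cQ_add I1 I2 (a := a) (b := t-i) (c := t) (by omega) (by omega)
    have h4 : cQ I1 I2 a (t-i) = q*I2 := by
      rw [h1a]
      exact cQ_period_mul I1 I2 hI2 q a
    omega
  have hasm := assembly ρ hρ0 (fun j => cQ I1 I2 (t-j) t) (I1+I2) I2 R (t-1) hI
    (by omega) hhe
  refine hasm.trans ?_
  refine mul_le_mul_of_nonneg_left ?_
    (Finset.sum_nonneg fun q _ => pow_nonneg (pow_nonneg hρ0 _) _)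
  have hm1 : min (I1+I2) (t-1) ≤ I1+I2 := min_le_left _ _
  have hm2 : min (I1+I2) (t-1) ≤ t-1 := min_le_right _ _
  have hcard : ∀ i ∈ Icc 1 (min (I1+I2) (t-1)), cQ I1 I2 (t-i) t
      = ((Icc 1 i).filter (fun i' => ¬ (t - i') % (I1+I2) ∈ Icc 1 I1)).card := by
    intro i hi
    obtain ⟨hi1, him⟩ := mem_Icc.mp hi
    rw [cQ]
    refine Finset.card_bij' (fun l _ => t - l) (fun i' _ => t - i') ?_ ?_ ?_ ?_
    · intro l hl
      simp only [mem_filter, mem_Ico, mem_Icc] at hl ⊢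
      have hrw : t - (t - l) = l := by omega
      rw [hrw]
      refine ⟨⟨by omega, by omega⟩, hl.2⟩
    · intro i' hi'
      simp only [mem_filter, mem_Icc] at hi'
      simp only [mem_filter, mem_Ico, mem_Icc]
      exact ⟨⟨by omega, by omega⟩, hi'.2⟩
    · intro l hl
      simp only [mem_filter, mem_Ico] at hl
      show t - (t - l) = l
      omega
    · intro i' hi'
      simp only [mem_filter, mem_Icc] at hi'
      show t - (t - i') = i'
      omega
  rw [Finset.sum_congr rfl (fun i hi => by rw [hcard i hi])]
  refine per_period ρ hρ0 hρ1 _ _ I1 I2 ?_ ?_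
  · have hmaps : ∀ i ∈ (Icc 1 (min (I1+I2) (t-1))).filter
          (fun i' => ¬ (t - i') % (I1+I2) ∈ Icc 1 I1),
        (t - i) % (I1+I2) ∈ (range (I1+I2)).filter (fun r => ¬ r ∈ Icc 1 I1) := by
      intro i hi
      simp only [mem_filter] at hi
      simp only [mem_filter, mem_range]
      exact ⟨Nat.mod_lt _ hI, hi.2⟩
    have hinj : Set.InjOn (fun i => (t - i) % (I1+I2))
        ↑((Icc 1 (min (I1+I2) (t-1))).filter
          (fun i' => ¬ (t - i') % (I1+I2) ∈ Icc 1 I1)) := by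
      intro x hx y hy hxy
      simp only [coe_filter, Set.mem_setOf_eq, mem_Icc] at hx hy
      have hq : (t - x) % (I1+I2) = (t - y) % (I1+I2) := hxy
      by_contra hne
      rcases Nat.lt_or_ge x y with h | h
      · exact mod_ne (show t - y < t - x by omega)
          (show t - x < t - y + (I1+I2) by omega) hq.symm
      · exact mod_ne (show t - x < t - y by omega)
          (show t - y < t - x + (I1+I2) by omega) hq
    have hcc := Finset.card_le_card_of_injOn _ hmaps hinj
    rwa [range_filter_not_card I1 I2 hI2] at hcc
  · have hmaps : ∀ i ∈ (Icc 1 (min (I1+I2) (t-1))).filter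
          (fun i => ¬ ¬ (t - i) % (I1+I2) ∈ Icc 1 I1),
        (t - i) % (I1+I2) ∈ Icc 1 I1 := by
      intro i hi
      simp only [mem_filter, not_not] at hi
      exact hi.2
    have hinj : Set.InjOn (fun i => (t - i) % (I1+I2))
        ↑((Icc 1 (min (I1+I2) (t-1))).filter
          (fun i => ¬ ¬ (t - i) % (I1+I2) ∈ Icc 1 I1)) := by
      intro x hx y hy hxy
      simp only [coe_filter, Set.mem_setOf_eq, mem_Icc] at hx hy
      have hq : (t - x) % (I1+I2) = (t - y) % (I1+I2) := hxy
      by_contra hne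
      rcases Nat.lt_or_ge x y with h | h
      · exact mod_ne (show t - y < t - x by omega)
          (show t - x < t - y + (I1+I2) by omega) hq.symm
      · exact mod_ne (show t - x < t - y by omega)
          (show t - y < t - x + (I1+I2) by omega) hq
    have hcc := Finset.card_le_card_of_injOn _ hmaps hinj
    rwa [Nat.card_Icc, Nat.add_sub_cancel] at hcc

lemma col_bound (ρ : ℝ) (hρ0 : 0 ≤ ρ) (hρ1 : ρ < 1) (I1 I2 : ℕ) (hI2 : 1 ≤ I2)
    (R T s : ℕ) (hs : 1 ≤ s) (hT : T ≤ (R+1)*(I1+I2)) :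
    ∑ t ∈ Icc (s+1) T, rhoOne ρ I1 I2 s t ≤
      (∑ q ∈ range (R+1), (ρ^I2)^q) * ((I1:ℝ) + ∑ k ∈ Icc 1 I2, ρ^k) := by
  have hI : 0 < I1 + I2 := by omega
  have hre : ∑ t ∈ Icc (s+1) T, rhoOne ρ I1 I2 s t
      = ∑ j ∈ Icc 1 (T-s), ρ ^ (cQ I1 I2 s (s+j)) := by
    refine Finset.sum_nbij' (fun t => t - s) (fun j => s + j) ?_ ?_ ?_ ?_ ?_
    · intro a ha
      simp only [mem_Icc] at ha ⊢
      omega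
    · intro a ha
      simp only [mem_Icc] at ha ⊢
      omega
    · intro a ha
      simp only [mem_Icc] at ha
      show s + (a - s) = a
      omega
    · intro a ha
      simp only [mem_Icc] at ha
      show s + a - s = a
      omega
    · intro t ht
      simp only [mem_Icc] at ht
      show rhoOne ρ I1 I2 s t = ρ ^ cQ I1 I2 s (s + (t - s))
      rw [rhoOne_eq ρ I1 I2 (by omega : s < t)]
      have hss : s + (t - s) = t := by omega
      rw [hss]
  rw [hre]
  have hhe : ∀ q i, 1 ≤ i → i ≤ I1+I2 → q*(I1+I2) + i ≤ T-s →
      cQ I1 I2 s (s+(q*(I1+I2)+i)) = q*I2 + cQ I1 I2 s (s+i) := by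
    intro q i h1 hiI hle
    have h3 := cQ_add I1 I2 (a := s) (b := s+i) (c := s+(q*(I1+I2)+i))
      (by omega) (by omega)
    have h4 : cQ I1 I2 (s+i) (s+(q*(I1+I2)+i)) = q*I2 := by
      have hrw : s+(q*(I1+I2)+i) = (s+i) + q*(I1+I2) := by ring
      rw [hrw]
      exact cQ_period_mul I1 I2 hI2 q (s+i)
    omega
  have hasm := assembly ρ hρ0 (fun j => cQ I1 I2 s (s+j)) (I1+I2) I2 R (T-s) hI
    (by omega) hhe
  refine hasm.trans ?_
  refine mul_le_mul_of_nonneg_left ?_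
    (Finset.sum_nonneg fun q _ => pow_nonneg (pow_nonneg hρ0 _) _)
  have hm1 : min (I1+I2) (T-s) ≤ I1+I2 := min_le_left _ _
  have hm2 : min (I1+I2) (T-s) ≤ T-s := min_le_right _ _
  have hcard : ∀ i ∈ Icc 1 (min (I1+I2) (T-s)), cQ I1 I2 s (s+i)
      = ((Icc 1 i).filter (fun i' => ¬ (s + i' - 1) % (I1+I2) ∈ Icc 1 I1)).card := by
    intro i hi
    obtain ⟨hi1, him⟩ := mem_Icc.mp hi
    rw [cQ]
    refine Finset.card_bij' (fun l _ => l - s + 1) (fun i' _ => s + i' - 1) ?_ ?_ ?_ ?_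
    · intro l hl
      simp only [mem_filter, mem_Ico, mem_Icc] at hl ⊢
      have hrw : s + (l - s + 1) - 1 = l := by omega
      rw [hrw]
      exact ⟨⟨by omega, by omega⟩, hl.2⟩
    · intro i' hi'
      simp only [mem_filter, mem_Icc] at hi'
      simp only [mem_filter, mem_Ico, mem_Icc]
      exact ⟨⟨by omega, by omega⟩, hi'.2⟩
    · intro l hl
      simp only [mem_filter, mem_Ico] at hl
      show s + (l - s + 1) - 1 = l
      omega
    · intro i' hi'
      simp only [mem_filter, mem_Icc] at hi'
      show s + i' - 1 - s + 1 = i'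
      omega
  rw [Finset.sum_congr rfl (fun i hi => by rw [hcard i hi])]
  refine per_period ρ hρ0 hρ1 _ _ I1 I2 ?_ ?_
  · have hmaps : ∀ i ∈ (Icc 1 (min (I1+I2) (T-s))).filter
          (fun i' => ¬ (s + i' - 1) % (I1+I2) ∈ Icc 1 I1),
        (s + i - 1) % (I1+I2) ∈ (range (I1+I2)).filter (fun r => ¬ r ∈ Icc 1 I1) := by
      intro i hi
      simp only [mem_filter] at hi
      simp only [mem_filter, mem_range]
      exact ⟨Nat.mod_lt _ hI, hi.2⟩
    have hinj : Set.InjOn (fun i => (s + i - 1) % (I1+I2))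
        ↑((Icc 1 (min (I1+I2) (T-s))).filter
          (fun i' => ¬ (s + i' - 1) % (I1+I2) ∈ Icc 1 I1)) := by
      intro x hx y hy hxy
      simp only [coe_filter, Set.mem_setOf_eq, mem_Icc] at hx hy
      have hq : (s + x - 1) % (I1+I2) = (s + y - 1) % (I1+I2) := hxy
      by_contra hne
      rcases Nat.lt_or_ge x y with h | h
      · exact mod_ne (show s + x - 1 < s + y - 1 by omega)
          (show s + y - 1 < s + x - 1 + (I1+I2) by omega) hq
      · exact mod_ne (show s + y - 1 < s + x - 1 by omega)
          (show s + x - 1 < s + y - 1 + (I1+I2) by omega) hq.symm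
    have hcc := Finset.card_le_card_of_injOn _ hmaps hinj
    rwa [range_filter_not_card I1 I2 hI2] at hcc
  · have hmaps : ∀ i ∈ (Icc 1 (min (I1+I2) (T-s))).filter
          (fun i => ¬ ¬ (s + i - 1) % (I1+I2) ∈ Icc 1 I1),
        (s + i - 1) % (I1+I2) ∈ Icc 1 I1 := by
      intro i hi
      simp only [mem_filter, not_not] at hi
      exact hi.2
    have hinj : Set.InjOn (fun i => (s + i - 1) % (I1+I2))
        ↑((Icc 1 (min (I1+I2) (T-s))).filter
          (fun i => ¬ ¬ (s + i - 1) % (I1+I2) ∈ Icc 1 I1)) := by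
      intro x hx y hy hxy
      simp only [coe_filter, Set.mem_setOf_eq, mem_Icc] at hx hy
      have hq : (s + x - 1) % (I1+I2) = (s + y - 1) % (I1+I2) := hxy
      by_contra hne
      rcases Nat.lt_or_ge x y with h | h
      · exact mod_ne (show s + x - 1 < s + y - 1 by omega)
          (show s + y - 1 < s + x - 1 + (I1+I2) by omega) hq
      · exact mod_ne (show s + y - 1 < s + x - 1 by omega)
          (show s + x - 1 < s + y - 1 + (I1+I2) by omega) hq.symm
    have hcc := Finset.card_le_card_of_injOn _ hmaps hinj
    rwa [Nat.card_Icc, Nat.add_sub_cancel] at hcc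

lemma geo_le (r : ℝ) (h0 : 0 ≤ r) (h1 : r < 1) (n : ℕ) :
    ∑ i ∈ range n, r ^ i ≤ (1 - r)⁻¹ := by
  have hr : (0:ℝ) < 1 - r := by linarith
  rw [geom_sum_eq (ne_of_lt h1), ← neg_div_neg_eq]
  have h2 : -(r ^ n - 1) = 1 - r ^ n := by ring
  have h3 : -(r - 1) = 1 - r := by ring
  have h4 := pow_nonneg h0 n
  rw [h2, h3, ← one_div]
  gcongr
  linarith

lemma GE_le_K (ρ : ℝ) (hρ0 : 0 ≤ ρ) (hρ1 : ρ < 1) (I1 I2 : ℕ) (hI2 : 1 ≤ I2) (R : ℕ) :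
    (∑ q ∈ range (R+1), (ρ^I2)^q) * ((I1:ℝ) + ∑ k ∈ Icc 1 I2, ρ^k) ≤
      (I1:ℝ)/(1-ρ^I2) + ρ/(1-ρ) := by
  have hx0 : 0 ≤ ρ^I2 := pow_nonneg hρ0 _
  have hx1 : ρ^I2 < 1 := pow_lt_one₀ hρ0 hρ1 (by omega)
  have h1x : (0:ℝ) < 1 - ρ^I2 := by linarith
  have h1ρ : (0:ℝ) < 1 - ρ := by linarith
  have hG : (∑ q ∈ range (R+1), (ρ^I2)^q) ≤ (1-ρ^I2)⁻¹ := geo_le _ hx0 hx1 _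
  have hA : ∑ k ∈ Icc 1 I2, ρ^k = ρ * ((1-ρ^I2)/(1-ρ)) := by
    rw [← Finset.Ico_add_one_right_eq_Icc, Finset.sum_Ico_eq_sum_range]
    have hn : I2 + 1 - 1 = I2 := by omega
    rw [hn]
    have hterm : ∀ i, ρ^(1+i) = ρ * ρ^i := fun i => by rw [pow_add, pow_one]
    rw [Finset.sum_congr rfl (fun i _ => hterm i), ← Finset.mul_sum,
      geom_sum_eq hρ1.ne]
    have hdd : (ρ^I2 - 1)/(ρ - 1) = (1 - ρ^I2)/(1 - ρ) := by
      rw [← neg_div_neg_eq]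
      congr 1 <;> ring
    rw [hdd]
  have hE0 : 0 ≤ (I1:ℝ) + ∑ k ∈ Icc 1 I2, ρ^k :=
    add_nonneg (Nat.cast_nonneg _) (Finset.sum_nonneg fun k _ => pow_nonneg hρ0 k)
  calc (∑ q ∈ range (R+1), (ρ^I2)^q) * ((I1:ℝ) + ∑ k ∈ Icc 1 I2, ρ^k)
      ≤ (1-ρ^I2)⁻¹ * ((I1:ℝ) + ∑ k ∈ Icc 1 I2, ρ^k) :=
        mul_le_mul_of_nonneg_right hG hE0
    _ = (I1:ℝ)/(1-ρ^I2) + ρ/(1-ρ) := by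
        rw [hA]
        field_simp
        try ring

/-- **Theorem (bound on `B_T` and `C_T` for the scheme `I_T¹`).**
For `S = {t : t mod I ∉ [I₁]}` with `I = I₁+I₂` and `T = (R+1)·I`,
`max{B_T, C_T} ≤ K²` where `K = I₁/(1−ρ^{I₂}) + ρ/(1−ρ)`. -/
theorem scheme_one_BT_CT_bound
    (ρ : ℝ) (hρ0 : 0 ≤ ρ) (hρ1 : ρ < 1)
    (I1 I2 : ℕ) (hI2 : 1 ≤ I2)
    (T R : ℕ) (hT : T = (R + 1) * (I1 + I2)) :
    max (BTone ρ I1 I2 T) (CTone ρ I1 I2 T) ≤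
      ((I1 : ℝ) / (1 - ρ ^ I2) + ρ / (1 - ρ)) ^ 2 := by
  have hI : 0 < I1 + I2 := by omega
  have hT1 : 1 ≤ T := by
    have h1 : 1 ≤ (R+1)*(I1+I2) := Nat.one_le_iff_ne_zero.mpr
      (Nat.mul_ne_zero (by omega) (by omega))
    omega
  set K : ℝ := (I1:ℝ)/(1-ρ^I2) + ρ/(1-ρ) with hK
  have hx1 : ρ^I2 < 1 := pow_lt_one₀ hρ0 hρ1 (by omega)
  have h1x : (0:ℝ) < 1 - ρ^I2 := by linarith
  have h1ρ : (0:ℝ) < 1 - ρ := by linarith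
  have hK0 : 0 ≤ K := by
    have ha : 0 ≤ (I1:ℝ)/(1-ρ^I2) := div_nonneg (Nat.cast_nonneg _) h1x.le
    have hb : 0 ≤ ρ/(1-ρ) := div_nonneg hρ0 h1ρ.le
    rw [hK]
    linarith
  have hrow : ∀ t, t ≤ T → ∑ s ∈ Icc 1 (t-1), rhoOne ρ I1 I2 s t ≤ K := by
    intro t htle
    refine (row_bound ρ hρ0 hρ1 I1 I2 hI2 R t ?_).trans
      (GE_le_K ρ hρ0 hρ1 I1 I2 hI2 R)
    omega
  have hrow0 : ∀ t, 0 ≤ ∑ s ∈ Icc 1 (t-1), rhoOne ρ I1 I2 s t :=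
    fun t => Finset.sum_nonneg fun s _ => rhoOne_nonneg ρ hρ0 I1 I2 s t
  refine max_le ?_ ?_
  · -- B_T bound
    rw [BTone]
    have hsum : ∑ t ∈ Icc 1 T, (∑ s ∈ Icc 1 (t-1), rhoOne ρ I1 I2 s t)^2
        ≤ (T:ℝ) * K^2 := by
      calc ∑ t ∈ Icc 1 T, (∑ s ∈ Icc 1 (t-1), rhoOne ρ I1 I2 s t)^2
          ≤ (Icc 1 T).card • K^2 := by
            refine Finset.sum_le_card_nsmul _ _ _ (fun t htmem => ?_)
            exact pow_le_pow_left₀ (hrow0 t) (hrow t (mem_Icc.mp htmem).2) 2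
        _ = (T:ℝ) * K^2 := by
            rw [Nat.card_Icc, Nat.add_sub_cancel, nsmul_eq_mul]
    calc (T:ℝ)⁻¹ * ∑ t ∈ Icc 1 T, (∑ s ∈ Icc 1 (t-1), rhoOne ρ I1 I2 s t)^2
        ≤ (T:ℝ)⁻¹ * ((T:ℝ) * K^2) :=
          mul_le_mul_of_nonneg_left hsum (inv_nonneg.mpr (Nat.cast_nonneg T))
      _ = K^2 := by
          rw [← mul_assoc, inv_mul_cancel₀ (by positivity : (T:ℝ) ≠ 0), one_mul]
  · -- C_T bound
    rw [CTone]
    refine Real.iSup_le (fun s => Real.iSup_le (fun hs => ?_) (sq_nonneg K)) (sq_nonneg K)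
    obtain ⟨hs1, hs2⟩ := mem_Icc.mp hs
    calc ∑ t ∈ Icc (s+1) T, rhoOne ρ I1 I2 s t * ∑ l ∈ Icc 1 (t-1), rhoOne ρ I1 I2 l t
        ≤ ∑ t ∈ Icc (s+1) T, rhoOne ρ I1 I2 s t * K := by
          refine Finset.sum_le_sum (fun t htm => ?_)
          exact mul_le_mul_of_nonneg_left (hrow t (mem_Icc.mp htm).2)
            (rhoOne_nonneg ρ hρ0 I1 I2 s t)
      _ = (∑ t ∈ Icc (s+1) T, rhoOne ρ I1 I2 s t) * K := by rw [← Finset.sum_mul]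
      _ ≤ K * K := by
          refine mul_le_mul_of_nonneg_right ?_ hK0
          exact (col_bound ρ hρ0 hρ1 I1 I2 hI2 R T s hs1 (le_of_eq hT)).trans
            (GE_le_K ρ hρ0 hρ1 I1 I2 hI2 R)
      _ = K^2 := (sq K).symm
end

section
/- Let f_1, …, f_n : ℝ^d → ℝ be differentiable with L-Lipschitz gradients, f = (1/n)∑_{k=1}^n f_k, and assume (1/n)∑_{k=1}^n ‖∇f_k(x) − ∇f(x)‖² ≤ κ² for all x ∈ ℝ^d. Then for any points x^{(1)}, …, x^{(n)} ∈ ℝ^d with average x̄ = (1/n)∑_{k=1}^n x^{(k)}, one has (1/n)∑_{k=1}^n ‖∇f_k(x^{(k)})‖² ≤ (8L²/n)∑_{k=1}^n ‖x^{(k)} − x̄‖² + 4κ² + 4‖(1/n)∑_{k=1}^n ∇f_k(x^{(k)})‖². -/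
open Finset

lemma jensen_avg {E : Type*} [NormedAddCommGroup E] [NormedSpace ℝ E]
    (n : ℕ) (hn : 0 < n) (v : Fin n → E) :
    ‖(n : ℝ)⁻¹ • ∑ j, v j‖ ^ 2 ≤ (n : ℝ)⁻¹ * ∑ j, ‖v j‖ ^ 2 := by
  have hnp : (0:ℝ) < n := by exact_mod_cast hn
  have h1 : ‖(n : ℝ)⁻¹ • ∑ j, v j‖ = (n : ℝ)⁻¹ * ‖∑ j, v j‖ := by
    rw [norm_smul]; simp [abs_of_pos (inv_pos.mpr hnp)]
  have h2 : ‖∑ j, v j‖ ≤ ∑ j, ‖v j‖ := norm_sum_le _ _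
  have h3 : (∑ j, ‖v j‖) ^ 2 ≤ (n : ℝ) * ∑ j, ‖v j‖ ^ 2 := by
    have := sq_sum_le_card_mul_sum_sq (s := Finset.univ) (f := fun j => ‖v j‖)
    simpa using this
  calc ‖(n : ℝ)⁻¹ • ∑ j, v j‖ ^ 2 = (n : ℝ)⁻¹ ^ 2 * ‖∑ j, v j‖ ^ 2 := by
        rw [h1]; ring
    _ ≤ (n : ℝ)⁻¹ ^ 2 * (∑ j, ‖v j‖) ^ 2 := by
        apply mul_le_mul_of_nonneg_left _ (by positivity)
        exact pow_le_pow_left₀ (norm_nonneg _) h2 2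
    _ ≤ (n : ℝ)⁻¹ ^ 2 * ((n : ℝ) * ∑ j, ‖v j‖ ^ 2) :=
        mul_le_mul_of_nonneg_left h3 (by positivity)
    _ = (n : ℝ)⁻¹ * ∑ j, ‖v j‖ ^ 2 := by field_simp

lemma four_sq {E : Type*} [NormedAddCommGroup E] (a b c d : E) :
    ‖a + b + c + d‖ ^ 2 ≤ 4 * (‖a‖ ^ 2 + ‖b‖ ^ 2 + ‖c‖ ^ 2 + ‖d‖ ^ 2) := by
  have h : ‖a + b + c + d‖ ≤ ‖a‖ + ‖b‖ + ‖c‖ + ‖d‖ := by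
    calc ‖a + b + c + d‖ ≤ ‖a + b + c‖ + ‖d‖ := norm_add_le _ _
      _ ≤ ‖a + b‖ + ‖c‖ + ‖d‖ := by gcongr; exact norm_add_le _ _
      _ ≤ ‖a‖ + ‖b‖ + ‖c‖ + ‖d‖ := by gcongr; exact norm_add_le _ _
  nlinarith [norm_nonneg a, norm_nonneg b, norm_nonneg c, norm_nonneg d,
    norm_nonneg (a + b + c + d), sq_nonneg (‖a‖-‖b‖), sq_nonneg (‖a‖-‖c‖),
    sq_nonneg (‖a‖-‖d‖), sq_nonneg (‖b‖-‖c‖), sq_nonneg (‖b‖-‖d‖), sq_nonneg (‖c‖-‖d‖)]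

/-- **Lemma (bound on the second moments of gradients).**
If `f_1, …, f_n` are differentiable with `L`-Lipschitz gradients,
`f = (1/n)∑ f_k`, and `(1/n)∑_k ‖∇f_k(x) − ∇f(x)‖² ≤ κ²` for all `x`, then for
any points `x⁽¹⁾, …, x⁽ⁿ⁾` with average `x̄`,
`(1/n)∑_k ‖∇f_k(x⁽ᵏ⁾)‖² ≤ (8L²/n)∑_k ‖x⁽ᵏ⁾ − x̄‖² + 4κ² + 4‖(1/n)∑_k ∇f_k(x⁽ᵏ⁾)‖²`. -/
theorem gradient_second_moment_bound
    (n d : ℕ) (hn : 0 < n)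
    (L κ : ℝ) (hL : 0 ≤ L) (hκ : 0 ≤ κ)
    (f : Fin n → EuclideanSpace ℝ (Fin d) → ℝ)
    (gradf : Fin n → EuclideanSpace ℝ (Fin d) → EuclideanSpace ℝ (Fin d))
    (hgrad : ∀ k x, HasGradientAt (f k) (gradf k x) x)
    (hLip : ∀ k (x y : EuclideanSpace ℝ (Fin d)), ‖gradf k x - gradf k y‖ ≤ L * ‖x - y‖)
    (hκbound : ∀ x : EuclideanSpace ℝ (Fin d),
      (n : ℝ)⁻¹ * ∑ k, ‖gradf k x - (n : ℝ)⁻¹ • ∑ j, gradf j x‖ ^ 2 ≤ κ ^ 2)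
    (x : Fin n → EuclideanSpace ℝ (Fin d)) :
    (n : ℝ)⁻¹ * ∑ k, ‖gradf k (x k)‖ ^ 2 ≤
      8 * L ^ 2 / n * ∑ k, ‖x k - (n : ℝ)⁻¹ • ∑ j, x j‖ ^ 2 +
        4 * κ ^ 2 + 4 * ‖(n : ℝ)⁻¹ • ∑ k, gradf k (x k)‖ ^ 2 := by
  have hnp : (0:ℝ) < n := by exact_mod_cast hn
  set xb : EuclideanSpace ℝ (Fin d) := (n : ℝ)⁻¹ • ∑ j, x j with hxb
  set g : EuclideanSpace ℝ (Fin d) := (n : ℝ)⁻¹ • ∑ k, gradf k (x k) with hg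
  set m : EuclideanSpace ℝ (Fin d) := (n : ℝ)⁻¹ • ∑ j, gradf j xb with hm
  -- c = m - g bound
  have hc : ‖m - g‖ ^ 2 ≤ L ^ 2 * ((n : ℝ)⁻¹ * ∑ j, ‖x j - xb‖ ^ 2) := by
    have hmg : m - g = (n : ℝ)⁻¹ • ∑ j, (gradf j xb - gradf j (x j)) := by
      rw [hm, hg, ← smul_sub, ← Finset.sum_sub_distrib]
    rw [hmg]
    calc ‖(n : ℝ)⁻¹ • ∑ j, (gradf j xb - gradf j (x j))‖ ^ 2
        ≤ (n : ℝ)⁻¹ * ∑ j, ‖gradf j xb - gradf j (x j)‖ ^ 2 := jensen_avg n hn _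
      _ ≤ (n : ℝ)⁻¹ * ∑ j, L ^ 2 * ‖x j - xb‖ ^ 2 := by
          apply mul_le_mul_of_nonneg_left _ (by positivity)
          apply Finset.sum_le_sum
          intro j _
          have := hLip j xb (x j)
          have h2 : ‖gradf j xb - gradf j (x j)‖ ^ 2 ≤ (L * ‖xb - x j‖) ^ 2 :=
            pow_le_pow_left₀ (norm_nonneg _) this 2
          rw [norm_sub_rev (x j) xb]
          calc ‖gradf j xb - gradf j (x j)‖ ^ 2 ≤ (L * ‖xb - x j‖)^2 := h2
            _ = L ^2 * ‖xb - x j‖^2 := by ring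
      _ = L ^ 2 * ((n : ℝ)⁻¹ * ∑ j, ‖x j - xb‖ ^ 2) := by
          rw [← Finset.mul_sum]; ring
  -- pointwise decomposition
  have hpt : ∀ k, ‖gradf k (x k)‖ ^ 2 ≤
      4 * (L ^ 2 * ‖x k - xb‖ ^ 2 + ‖gradf k xb - m‖ ^ 2 + ‖m - g‖ ^ 2 + ‖g‖ ^ 2) := by
    intro k
    have hdecomp : gradf k (x k) =
        (gradf k (x k) - gradf k xb) + (gradf k xb - m) + (m - g) + g := by abel
    have h4 := four_sq (gradf k (x k) - gradf k xb) (gradf k xb - m) (m - g) g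
    rw [← hdecomp] at h4
    have ha : ‖gradf k (x k) - gradf k xb‖ ^ 2 ≤ L ^ 2 * ‖x k - xb‖ ^ 2 := by
      have := pow_le_pow_left₀ (norm_nonneg _) (hLip k (x k) xb) 2
      calc ‖gradf k (x k) - gradf k xb‖ ^ 2 ≤ (L * ‖x k - xb‖)^2 := this
        _ = L^2 * ‖x k - xb‖^2 := by ring
    nlinarith
  -- sum it up
  have hsum : (n : ℝ)⁻¹ * ∑ k, ‖gradf k (x k)‖ ^ 2 ≤
      (n : ℝ)⁻¹ * ∑ k, 4 * (L ^ 2 * ‖x k - xb‖ ^ 2 + ‖gradf k xb - m‖ ^ 2 + ‖m - g‖ ^ 2 + ‖g‖ ^ 2) := by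
    apply mul_le_mul_of_nonneg_left _ (by positivity)
    exact Finset.sum_le_sum fun k _ => hpt k
  have hκ' := hκbound xb
  have hexpand : (n : ℝ)⁻¹ * ∑ k, 4 * (L ^ 2 * ‖x k - xb‖ ^ 2 + ‖gradf k xb - m‖ ^ 2 + ‖m - g‖ ^ 2 + ‖g‖ ^ 2)
      = 4 * L ^ 2 * ((n : ℝ)⁻¹ * ∑ k, ‖x k - xb‖ ^ 2)
        + 4 * ((n : ℝ)⁻¹ * ∑ k, ‖gradf k xb - m‖ ^ 2)
        + 4 * ‖m - g‖ ^ 2 + 4 * ‖g‖ ^ 2 := by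
    have h : ∀ k : Fin n, 4 * (L ^ 2 * ‖x k - xb‖ ^ 2 + ‖gradf k xb - m‖ ^ 2 + ‖m - g‖ ^ 2 + ‖g‖ ^ 2)
        = 4 * L ^ 2 * ‖x k - xb‖ ^ 2 + 4 * ‖gradf k xb - m‖ ^ 2 + (4 * ‖m - g‖ ^ 2 + 4 * ‖g‖ ^ 2) :=
      fun k => by ring
    simp only [h, Finset.sum_add_distrib, Finset.sum_const, Finset.card_univ, Fintype.card_fin,
      nsmul_eq_mul, ← Finset.mul_sum]
    field_simp
    ring
  have key : (n : ℝ)⁻¹ * ∑ k, ‖gradf k (x k)‖ ^ 2 ≤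
      8 * L ^ 2 * ((n : ℝ)⁻¹ * ∑ k, ‖x k - xb‖ ^ 2) + 4 * κ ^ 2 + 4 * ‖g‖ ^ 2 := by
    calc (n : ℝ)⁻¹ * ∑ k, ‖gradf k (x k)‖ ^ 2 ≤ _ := hsum
      _ = _ := hexpand
      _ ≤ 8 * L ^ 2 * ((n : ℝ)⁻¹ * ∑ k, ‖x k - xb‖ ^ 2) + 4 * κ ^ 2 + 4 * ‖g‖ ^ 2 := by
        nlinarith [hc, hκ']
  calc (n : ℝ)⁻¹ * ∑ k, ‖gradf k (x k)‖ ^ 2 ≤ _ := key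
    _ = 8 * L ^ 2 / n * ∑ k, ‖x k - xb‖ ^ 2 + 4 * κ ^ 2 + 4 * ‖g‖ ^ 2 := by
      field_simp
end

section
/- For the update scheme I_T^1, i.e., S = {t ∈ ℕ : t mod I ∉ {1,…,I_1}} with I = I_1 + I_2, and any integer j ≥ 0, one has α_j := ∑_{t=jI+1}^{(j+1)I} ∑_{s=1}^{t−1} ρ_{s,t−1} ≤ (1/2)·( ((1+ρ^{I_2})/(1−ρ^{I_2}))·I_1² + ((1+ρ)/(1−ρ))·I_1 ) + I·ρ/(1−ρ), and β_j := ∑_{t=jI+1}^{(j+1)I} ∑_{s=1}^{t−1} ρ_{s,t−1}² ≤ (1/2)·( ((1+ρ^{2I_2})/(1−ρ^{2I_2}))·I_1² + ((1+ρ²)/(1−ρ²))·I_1 ) + I·ρ²/(1−ρ²). -/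
open Finset

namespace SchemeOneAux

/-- number of update indices in `[s, t)` -/
def cnt (I1 I2 s t : ℕ) : ℕ :=
  ((Finset.Ico s t).filter (fun l => ¬ l % (I1 + I2) ∈ Finset.Icc 1 I1)).card

/-- closed form of `cnt (j*I + r - e) (j*I + r)` -/
def cc (I1 I2 r e : ℕ) : ℕ :=
  min e (r - (I1 + 1)) + (if r ≤ e then 1 + min (e - r) (I2 - 1) else 0)

lemma cnt_split (I1 I2 s u t : ℕ) (h1 : s ≤ u) (h2 : u ≤ t) :
    cnt I1 I2 s t = cnt I1 I2 s u + cnt I1 I2 u t := by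
  unfold cnt
  rw [← Finset.Ico_union_Ico_eq_Ico h1 h2, Finset.filter_union,
    Finset.card_union_of_disjoint]
  exact Finset.disjoint_filter_filter (Finset.Ico_disjoint_Ico_consecutive s u t)

lemma cnt_period (I1 I2 : ℕ) (hI2 : 1 ≤ I2) (a : ℕ) :
    cnt I1 I2 a (a + (I1 + I2)) = I2 := by
  induction a with
  | zero =>
    unfold cnt
    simp only [Nat.zero_add]
    have h1 : (Finset.Ico 0 (I1 + I2)).filter
        (fun l => ¬ l % (I1 + I2) ∈ Finset.Icc 1 I1)
        = (Finset.Ico 0 (I1 + I2)).filter (fun l => ¬ l ∈ Finset.Icc 1 I1) := by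
      apply Finset.filter_congr
      intro x hx
      simp only [Finset.mem_Ico] at hx
      rw [Nat.mod_eq_of_lt hx.2]
    rw [h1]
    have h2 : (Finset.Ico 0 (I1 + I2)).filter (fun l => ¬ l ∈ Finset.Icc 1 I1)
        = insert 0 (Finset.Icc (I1 + 1) (I1 + I2 - 1)) := by
      ext x
      simp only [Finset.mem_filter, Finset.mem_Ico, Finset.mem_Icc,
        Finset.mem_insert]
      omega
    rw [h2, Finset.card_insert_of_notMem (by simp), Nat.card_Icc]
    omega
  | succ a ih =>
    have e1 : Finset.Ico a (a + (I1 + I2)) =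
        insert a (Finset.Ico (a + 1) (a + (I1 + I2))) := by
      ext x; simp only [Finset.mem_Ico, Finset.mem_insert]; omega
    have e2 : Finset.Ico (a + 1) (a + 1 + (I1 + I2)) =
        insert (a + (I1 + I2)) (Finset.Ico (a + 1) (a + (I1 + I2))) := by
      ext x; simp only [Finset.mem_Ico, Finset.mem_insert]; omega
    have hmod : (a + (I1 + I2)) % (I1 + I2) = a % (I1 + I2) :=
      Nat.add_mod_right a (I1 + I2)
    unfold cnt at ih ⊢
    rw [e2, Finset.filter_insert]
    rw [e1, Finset.filter_insert] at ih
    by_cases hP : ¬ (a + (I1 + I2)) % (I1 + I2) ∈ Finset.Icc 1 I1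
    · rw [if_pos hP]
      rw [if_pos (by rwa [hmod] at hP)] at ih
      rw [Finset.card_insert_of_notMem (by simp [Finset.mem_Ico])]
      rw [Finset.card_insert_of_notMem (by simp [Finset.mem_Ico])] at ih
      omega
    · rw [if_neg hP]
      rw [if_neg (by rwa [hmod] at hP)] at ih
      exact ih

lemma cnt_window (I1 I2 k lo hi : ℕ) (hhi : hi ≤ I1 + I2) :
    cnt I1 I2 (k * (I1 + I2) + lo) (k * (I1 + I2) + hi)
      = ((Finset.Ico lo hi).filter (fun v => ¬ v ∈ Finset.Icc 1 I1)).card := by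
  unfold cnt
  apply Finset.card_bij' (fun l _ => l - k * (I1 + I2)) (fun v _ => k * (I1 + I2) + v)
  · intro l hl
    simp only [Finset.mem_filter, Finset.mem_Ico, Finset.mem_Icc] at hl ⊢
    have hmod : l % (I1 + I2) = l - k * (I1 + I2) := by
      conv_lhs => rw [show l = (l - k * (I1 + I2)) + k * (I1 + I2) by omega]
      rw [Nat.add_mul_mod_self_right, Nat.mod_eq_of_lt (by omega)]
    rw [hmod] at hl
    omega
  · intro v hv
    simp only [Finset.mem_filter, Finset.mem_Ico, Finset.mem_Icc] at hv ⊢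
    have hmod : (k * (I1 + I2) + v) % (I1 + I2) = v := by
      rw [show k * (I1 + I2) + v = v + k * (I1 + I2) by ring]
      rw [Nat.add_mul_mod_self_right, Nat.mod_eq_of_lt (by omega)]
    rw [hmod]
    omega
  · intro l hl
    simp only [Finset.mem_filter, Finset.mem_Ico] at hl
    omega
  · intro v _
    omega

lemma filter_card_pos (I1 lo hi : ℕ) (hlo : 1 ≤ lo) :
    ((Finset.Ico lo hi).filter (fun v => ¬ v ∈ Finset.Icc 1 I1)).card
      = hi - max lo (I1 + 1) := by
  have h : (Finset.Ico lo hi).filter (fun v => ¬ v ∈ Finset.Icc 1 I1)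
      = Finset.Ico (max lo (I1 + 1)) hi := by
    ext v
    simp only [Finset.mem_filter, Finset.mem_Ico, Finset.mem_Icc]
    omega
  rw [h, Nat.card_Ico]

lemma filter_card_zero (I1 hi : ℕ) (hhi : 1 ≤ hi) :
    ((Finset.Ico 0 hi).filter (fun v => ¬ v ∈ Finset.Icc 1 I1)).card
      = 1 + (hi - (I1 + 1)) := by
  have h : (Finset.Ico 0 hi).filter (fun v => ¬ v ∈ Finset.Icc 1 I1)
      = insert 0 (Finset.Ico (I1 + 1) hi) := by
    ext v
    simp only [Finset.mem_filter, Finset.mem_Ico, Finset.mem_Icc,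
      Finset.mem_insert]
    omega
  rw [h, Finset.card_insert_of_notMem (by simp), Nat.card_Ico]
  omega

lemma cnt_period_mul (I1 I2 : ℕ) (hI2 : 1 ≤ I2) :
    ∀ m e t : ℕ, m * (I1 + I2) + e ≤ t →
      cnt I1 I2 (t - (m * (I1 + I2) + e)) t = I2 * m + cnt I1 I2 (t - e) t := by
  intro m
  induction m with
  | zero => intro e t h; simp
  | succ n ih =>
    intro e t h
    rw [Nat.succ_mul] at h ⊢
    have h' : n * (I1 + I2) + e ≤ t := by omega
    rw [cnt_split I1 I2 _ (t - (n * (I1 + I2) + e)) t (by omega) (by omega)]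
    rw [ih e t h']
    have hper := cnt_period I1 I2 hI2 (t - (n * (I1 + I2) + (I1 + I2) + e))
    rw [show t - (n * (I1 + I2) + (I1 + I2) + e) + (I1 + I2)
        = t - (n * (I1 + I2) + e) by omega] at hper
    rw [hper]
    ring

lemma cnt_formula (I1 I2 j r e : ℕ) (hI2 : 1 ≤ I2) (hr1 : 1 ≤ r)
    (hrI : r ≤ I1 + I2) (heI : e < I1 + I2) (het : e < j * (I1 + I2) + r) :
    cnt I1 I2 (j * (I1 + I2) + r - e) (j * (I1 + I2) + r) = cc I1 I2 r e := by
  rcases le_or_gt r e with hre | hre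
  · -- case r ≤ e; then j ≥ 1
    obtain ⟨j', rfl⟩ : ∃ j', j = j' + 1 := by
      rcases Nat.eq_zero_or_pos j with h0 | h
      · subst h0; simp at het; omega
      · exact ⟨j - 1, by omega⟩
    have hKe : (j' + 1) * (I1 + I2) = j' * (I1 + I2) + (I1 + I2) := by ring
    rw [hKe]
    have hsplit := cnt_split I1 I2 (j' * (I1 + I2) + (I1 + I2) + r - e)
      (j' * (I1 + I2) + (I1 + I2)) (j' * (I1 + I2) + (I1 + I2) + r)
      (by omega) (by omega)
    rw [hsplit]
    have hw2 : cnt I1 I2 (j' * (I1 + I2) + (I1 + I2))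
        (j' * (I1 + I2) + (I1 + I2) + r)
        = ((Finset.Ico 0 r).filter (fun v => ¬ v ∈ Finset.Icc 1 I1)).card := by
      have := cnt_window I1 I2 (j' + 1) 0 r hrI
      rw [hKe] at this
      simpa using this
    have hw1 : cnt I1 I2 (j' * (I1 + I2) + (I1 + I2) + r - e)
        (j' * (I1 + I2) + (I1 + I2))
        = ((Finset.Ico ((I1 + I2) - (e - r)) (I1 + I2)).filter
            (fun v => ¬ v ∈ Finset.Icc 1 I1)).card := by
      have := cnt_window I1 I2 j' ((I1 + I2) - (e - r)) (I1 + I2) le_rfl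
      rw [show j' * (I1 + I2) + ((I1 + I2) - (e - r))
          = j' * (I1 + I2) + (I1 + I2) + r - e by omega,
        show j' * (I1 + I2) + (I1 + I2) = (j' + 1) * (I1 + I2) by ring] at this
      rw [hKe] at this
      exact this
    rw [hw1, hw2, filter_card_pos I1 _ _ (by omega), filter_card_zero I1 _ (by omega)]
    unfold cc
    rw [if_pos hre]
    omega
  · -- case e < r
    have := cnt_window I1 I2 j (r - e) r hrI
    rw [show j * (I1 + I2) + (r - e) = j * (I1 + I2) + r - e by omega] at this
    rw [this, filter_card_pos I1 _ _ (by omega)]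
    unfold cc
    rw [if_neg (by omega)]
    omega


lemma S_eval_A (ρ : ℝ) (I1 I2 r : ℕ) (hI2 : 1 ≤ I2) (h1 : 1 ≤ r) (h2 : r ≤ I1 + 1) :
    ∑ e ∈ Finset.range (I1 + I2), ρ ^ (cc I1 I2 r e)
      = (r : ℝ) + (∑ w ∈ Finset.range (I2 - 1), ρ ^ (1 + w))
        + ((I1 + 1 - r : ℕ) : ℝ) * ρ ^ I2 := by
  rw [show Finset.range (I1 + I2) = Finset.Ico 0 (I1 + I2) by rw [Finset.range_eq_Ico]]
  rw [← Finset.sum_Ico_consecutive _ (Nat.zero_le r) (show r ≤ I1 + I2 by omega)]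
  rw [← Finset.sum_Ico_consecutive _ (show r ≤ r + (I2 - 1) by omega)
    (show r + (I2 - 1) ≤ I1 + I2 by omega)]
  have p1 : ∑ e ∈ Finset.Ico 0 r, ρ ^ (cc I1 I2 r e) = (r : ℝ) := by
    have hc : ∀ e ∈ Finset.Ico 0 r, ρ ^ (cc I1 I2 r e) = 1 := by
      intro e he
      simp only [Finset.mem_Ico] at he
      have hcc : cc I1 I2 r e = 0 := by
        unfold cc
        rw [if_neg (by omega)]
        omega
      rw [hcc, pow_zero]
    rw [Finset.sum_congr rfl hc, Finset.sum_const, Nat.card_Ico]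
    simp
  have p2 : ∑ e ∈ Finset.Ico r (r + (I2 - 1)), ρ ^ (cc I1 I2 r e)
      = ∑ w ∈ Finset.range (I2 - 1), ρ ^ (1 + w) := by
    rw [Finset.sum_Ico_eq_sum_range]
    rw [show r + (I2 - 1) - r = I2 - 1 by omega]
    refine Finset.sum_congr rfl (fun i hi => ?_)
    simp only [Finset.mem_range] at hi
    have hcc : cc I1 I2 r (r + i) = 1 + i := by
      unfold cc
      rw [if_pos (by omega)]
      omega
    rw [hcc]
  have p3 : ∑ e ∈ Finset.Ico (r + (I2 - 1)) (I1 + I2), ρ ^ (cc I1 I2 r e)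
      = ((I1 + 1 - r : ℕ) : ℝ) * ρ ^ I2 := by
    have hc : ∀ e ∈ Finset.Ico (r + (I2 - 1)) (I1 + I2),
        ρ ^ (cc I1 I2 r e) = ρ ^ I2 := by
      intro e he
      simp only [Finset.mem_Ico] at he
      have hcc : cc I1 I2 r e = I2 := by
        unfold cc
        rw [if_pos (by omega)]
        omega
      rw [hcc]
    rw [Finset.sum_congr rfl hc, Finset.sum_const, Nat.card_Ico, nsmul_eq_mul]
    congr 2
    omega
  rw [p1, p2, p3]
  ring

lemma S_eval_B (ρ : ℝ) (I1 I2 r : ℕ) (hI2 : 1 ≤ I2) (h1 : I1 + 2 ≤ r)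
    (h2 : r ≤ I1 + I2) :
    ∑ e ∈ Finset.range (I1 + I2), ρ ^ (cc I1 I2 r e)
      = (∑ w ∈ Finset.range I2, ρ ^ w) + (I1 : ℝ) * ρ ^ (r - (I1 + 1)) := by
  have hu1 : 1 ≤ r - (I1 + 1) := by omega
  have hu2 : r - (I1 + 1) ≤ I2 - 1 := by omega
  rw [show Finset.range (I1 + I2) = Finset.Ico 0 (I1 + I2) by rw [Finset.range_eq_Ico]]
  rw [← Finset.sum_Ico_consecutive _ (Nat.zero_le (r - (I1 + 1)))
    (show r - (I1 + 1) ≤ I1 + I2 by omega)]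
  rw [← Finset.sum_Ico_consecutive _ (show r - (I1 + 1) ≤ r by omega)
    (show r ≤ I1 + I2 by omega)]
  have p1 : ∑ e ∈ Finset.Ico 0 (r - (I1 + 1)), ρ ^ (cc I1 I2 r e)
      = ∑ w ∈ Finset.range (r - (I1 + 1)), ρ ^ w := by
    rw [show Finset.range (r - (I1 + 1)) = Finset.Ico 0 (r - (I1 + 1)) by rw [Finset.range_eq_Ico]]
    refine Finset.sum_congr rfl (fun e he => ?_)
    simp only [Finset.mem_Ico] at he
    have hcc : cc I1 I2 r e = e := by
      unfold cc
      rw [if_neg (by omega)]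
      omega
    rw [hcc]
  have p2 : ∑ e ∈ Finset.Ico (r - (I1 + 1)) r, ρ ^ (cc I1 I2 r e)
      = ((I1 : ℝ) + 1) * ρ ^ (r - (I1 + 1)) := by
    have hc : ∀ e ∈ Finset.Ico (r - (I1 + 1)) r,
        ρ ^ (cc I1 I2 r e) = ρ ^ (r - (I1 + 1)) := by
      intro e he
      simp only [Finset.mem_Ico] at he
      have hcc : cc I1 I2 r e = r - (I1 + 1) := by
        unfold cc
        rw [if_neg (by omega)]
        omega
      rw [hcc]
    rw [Finset.sum_congr rfl hc, Finset.sum_const, Nat.card_Ico, nsmul_eq_mul]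
    congr 1
    rw [show r - (r - (I1 + 1)) = I1 + 1 by omega]
    push_cast
    ring
  have p3 : ∑ e ∈ Finset.Ico r (I1 + I2), ρ ^ (cc I1 I2 r e)
      = ∑ w ∈ Finset.range (I2 - 1 - (r - (I1 + 1))), ρ ^ (r - (I1 + 1) + 1 + w) := by
    rw [Finset.sum_Ico_eq_sum_range]
    rw [show I1 + I2 - r = I2 - 1 - (r - (I1 + 1)) by omega]
    refine Finset.sum_congr rfl (fun i hi => ?_)
    simp only [Finset.mem_range] at hi
    have hcc : cc I1 I2 r (r + i) = r - (I1 + 1) + 1 + i := by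
      unfold cc
      rw [if_pos (by omega)]
      omega
    rw [hcc]
  rw [p1, p2, p3]
  have hgeom : ∑ w ∈ Finset.range I2, ρ ^ w
      = (∑ w ∈ Finset.range (r - (I1 + 1)), ρ ^ w) + ρ ^ (r - (I1 + 1))
        + ∑ w ∈ Finset.range (I2 - 1 - (r - (I1 + 1))), ρ ^ (r - (I1 + 1) + 1 + w) := by
    conv_lhs => rw [show Finset.range I2 = Finset.Ico 0 I2 by rw [Finset.range_eq_Ico]]
    rw [← Finset.sum_Ico_consecutive _ (Nat.zero_le (r - (I1 + 1) + 1))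
      (show r - (I1 + 1) + 1 ≤ I2 by omega)]
    congr 1
    · rw [← Finset.range_eq_Ico, Finset.sum_range_succ]
    · rw [Finset.sum_Ico_eq_sum_range]
      rw [show I2 - (r - (I1 + 1) + 1) = I2 - 1 - (r - (I1 + 1)) by omega]
  rw [hgeom]
  ring

lemma inner_le (ρ : ℝ) (hρ0 : 0 ≤ ρ) (hρ1 : ρ < 1) (I1 I2 : ℕ) (hI2 : 1 ≤ I2)
    (j t : ℕ) (ht1 : j * (I1 + I2) + 1 ≤ t) (ht2 : t ≤ j * (I1 + I2) + (I1 + I2)) :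
    ∑ s ∈ Finset.Icc 1 (t - 1), rhoOne ρ I1 I2 s t
      ≤ (1 / (1 - ρ ^ I2)) * (∑ e ∈ Finset.range (I1 + I2),
          ρ ^ (cc I1 I2 (t - j * (I1 + I2)) e)) - 1 := by
  have hIpos : 0 < I1 + I2 := by omega
  have hr1 : 1 ≤ t - j * (I1 + I2) := by omega
  have hr2 : t - j * (I1 + I2) ≤ I1 + I2 := by omega
  have hq0 : (0:ℝ) ≤ ρ ^ I2 := pow_nonneg hρ0 _
  have hq1 : ρ ^ I2 < 1 := pow_lt_one₀ hρ0 hρ1 (by omega)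
  have h1q : (0:ℝ) < 1 - ρ ^ I2 := by linarith
  -- rewrite summand and reindex s ↦ d = t - s
  have hreind : ∑ s ∈ Finset.Icc 1 (t - 1), rhoOne ρ I1 I2 s t
      = ∑ d ∈ Finset.Icc 1 (t - 1),
          (ρ ^ I2) ^ (d / (I1 + I2)) * ρ ^ (cc I1 I2 (t - j * (I1 + I2)) (d % (I1 + I2))) := by
    apply Finset.sum_nbij' (fun s => t - s) (fun d => t - d)
    · intro a ha; simp only [Finset.mem_Icc] at ha ⊢; omega
    · intro a ha; simp only [Finset.mem_Icc] at ha ⊢; omega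
    · intro a ha; simp only [Finset.mem_Icc] at ha; omega
    · intro a ha; simp only [Finset.mem_Icc] at ha; omega
    · intro s hs
      simp only [Finset.mem_Icc] at hs
      unfold rhoOne
      rw [if_pos (by omega : s < t)]
      have hicc : Finset.Icc s (t - 1) = Finset.Ico s t := by
        rw [← Finset.Ico_add_one_right_eq_Icc]
        congr 1
        omega
      rw [hicc]
      have hcnt : cnt I1 I2 s t
          = I2 * ((t - s) / (I1 + I2))
            + cc I1 I2 (t - j * (I1 + I2)) ((t - s) % (I1 + I2)) := by
        have hdm : (t - s) / (I1 + I2) * (I1 + I2) + (t - s) % (I1 + I2) = t - s := by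
          rw [mul_comm]; exact Nat.div_add_mod (t - s) (I1 + I2)
        have hmodlt : (t - s) % (I1 + I2) < I1 + I2 := Nat.mod_lt _ hIpos
        have hmodle : (t - s) % (I1 + I2) ≤ t - s := Nat.mod_le _ _
        have h1 := cnt_period_mul I1 I2 hI2 ((t - s) / (I1 + I2))
          ((t - s) % (I1 + I2)) t (by omega)
        rw [hdm] at h1
        have h2 := cnt_formula I1 I2 j (t - j * (I1 + I2)) ((t - s) % (I1 + I2))
          hI2 hr1 hr2 hmodlt (by omega)
        rw [show j * (I1 + I2) + (t - j * (I1 + I2)) = t by omega] at h2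
        rw [show t - (t - s) = s by omega] at h1
        rw [h1, h2]
      rw [show ((Finset.Ico s t).filter
          (fun l => ¬ l % (I1 + I2) ∈ Finset.Icc 1 I1)).card = cnt I1 I2 s t from rfl]
      rw [hcnt, pow_add, pow_mul]
  rw [hreind]
  -- injection into a product set
  have hinj : ∀ x ∈ Finset.Icc 1 (t - 1), ∀ y ∈ Finset.Icc 1 (t - 1),
      (fun d => (d / (I1 + I2), d % (I1 + I2))) x
        = (fun d => (d / (I1 + I2), d % (I1 + I2))) y → x = y := by
    intro x hx y hy hxy
    simp only [Prod.mk.injEq] at hxy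
    have h1 := Nat.div_add_mod x (I1 + I2)
    have h2 := Nat.div_add_mod y (I1 + I2)
    have e1 : (I1 + I2) * (x / (I1 + I2)) = (I1 + I2) * (y / (I1 + I2)) := by
      rw [hxy.1]
    omega
  have himg := Finset.sum_image
    (g := fun d => (d / (I1 + I2), d % (I1 + I2)))
    (f := fun p : ℕ × ℕ =>
      (ρ ^ I2) ^ p.1 * ρ ^ (cc I1 I2 (t - j * (I1 + I2)) p.2)) hinj
  rw [← himg]
  have hsub : (Finset.Icc 1 (t - 1)).image (fun d => (d / (I1 + I2), d % (I1 + I2)))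
      ⊆ (Finset.range t ×ˢ Finset.range (I1 + I2)).erase (0, 0) := by
    intro p hp
    simp only [Finset.mem_image, Finset.mem_Icc] at hp
    obtain ⟨d, hd, rfl⟩ := hp
    have hdm := Nat.div_add_mod d (I1 + I2)
    simp only [Finset.mem_erase, Finset.mem_product, Finset.mem_range, Prod.mk.injEq,
      ne_eq, not_and]
    refine ⟨?_, ?_, Nat.mod_lt _ hIpos⟩
    · intro h1 h2
      rw [h1, Nat.mul_zero] at hdm
      omega
    · exact lt_of_le_of_lt (Nat.div_le_self d _) (by omega)
  have hbound := Finset.sum_le_sum_of_subset_of_nonneg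
    (f := fun p : ℕ × ℕ => (ρ ^ I2) ^ p.1 * ρ ^ (cc I1 I2 (t - j * (I1 + I2)) p.2))
    hsub (fun p _ _ => mul_nonneg (pow_nonneg hq0 _) (pow_nonneg hρ0 _))
  refine le_trans hbound ?_
  -- evaluate the erased product sum
  have hmem : ((0, 0) : ℕ × ℕ) ∈ Finset.range t ×ˢ Finset.range (I1 + I2) := by
    simp only [Finset.mem_product, Finset.mem_range]
    omega
  have herase := Finset.sum_erase_add (Finset.range t ×ˢ Finset.range (I1 + I2))
    (fun p : ℕ × ℕ => (ρ ^ I2) ^ p.1 * ρ ^ (cc I1 I2 (t - j * (I1 + I2)) p.2)) hmem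
  have h00 : (ρ ^ I2) ^ (0:ℕ) * ρ ^ (cc I1 I2 (t - j * (I1 + I2)) 0) = 1 := by
    have hcc : cc I1 I2 (t - j * (I1 + I2)) 0 = 0 := by
      unfold cc
      rw [if_neg (by omega)]
      omega
    rw [hcc, pow_zero, pow_zero, mul_one]
  have htot : ∑ p ∈ Finset.range t ×ˢ Finset.range (I1 + I2),
      (ρ ^ I2) ^ p.1 * ρ ^ (cc I1 I2 (t - j * (I1 + I2)) p.2)
      = (∑ m ∈ Finset.range t, (ρ ^ I2) ^ m)
        * (∑ e ∈ Finset.range (I1 + I2), ρ ^ (cc I1 I2 (t - j * (I1 + I2)) e)) := by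
    rw [Finset.sum_mul_sum, Finset.sum_product]
  have hgeom : ∑ m ∈ Finset.range t, (ρ ^ I2) ^ m ≤ 1 / (1 - ρ ^ I2) := by
    rw [geom_sum_eq hq1.ne]
    rw [show ((ρ ^ I2) ^ t - 1) / (ρ ^ I2 - 1) = (1 - (ρ ^ I2) ^ t) / (1 - ρ ^ I2) by
      rw [div_eq_div_iff (by linarith) (by linarith)]; ring]
    rw [div_le_div_iff₀ h1q h1q]
    have : (0:ℝ) ≤ (ρ ^ I2) ^ t := pow_nonneg hq0 _
    nlinarith
  have hS0 : (0:ℝ) ≤ ∑ e ∈ Finset.range (I1 + I2),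
      ρ ^ (cc I1 I2 (t - j * (I1 + I2)) e) :=
    Finset.sum_nonneg (fun e _ => pow_nonneg hρ0 _)
  have : ∑ p ∈ (Finset.range t ×ˢ Finset.range (I1 + I2)).erase (0, 0),
      (ρ ^ I2) ^ p.1 * ρ ^ (cc I1 I2 (t - j * (I1 + I2)) p.2)
      = (∑ m ∈ Finset.range t, (ρ ^ I2) ^ m)
        * (∑ e ∈ Finset.range (I1 + I2), ρ ^ (cc I1 I2 (t - j * (I1 + I2)) e)) - 1 := by
    have := herase
    rw [htot] at this
    have h00' : ((fun p : ℕ × ℕ => (ρ ^ I2) ^ p.1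
        * ρ ^ (cc I1 I2 (t - j * (I1 + I2)) p.2)) (0, 0)) = 1 := h00
    linarith [this, h00']
  rw [this]
  have := mul_le_mul_of_nonneg_right hgeom hS0
  linarith

lemma gauss_sum (n : ℕ) : ∑ r ∈ Finset.Icc 1 n, (r : ℝ) = n * (n + 1) / 2 := by
  induction n with
  | zero => simp
  | succ n ih =>
    rw [Finset.sum_Icc_succ_top (by omega), ih]
    push_cast
    ring

lemma T_eval (ρ : ℝ) (I1 I2 : ℕ) (hI2 : 1 ≤ I2) :
    ∑ r ∈ Finset.Icc 1 (I1 + I2), (∑ e ∈ Finset.range (I1 + I2), ρ ^ (cc I1 I2 r e))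
      = ((I1 : ℝ) + 1) * ((I1 : ℝ) + 2) / 2
        + (2 * (I1 : ℝ) + 1) * (∑ w ∈ Finset.range (I2 - 1), ρ ^ (1 + w))
        + ((I1 : ℝ) * ((I1 : ℝ) + 1) / 2) * ρ ^ I2
        + ((I2 : ℝ) - 1) * (1 + (∑ w ∈ Finset.range (I2 - 1), ρ ^ (1 + w))) := by
  have hgeo0 : ∑ w ∈ Finset.range I2, ρ ^ w
      = 1 + ∑ w ∈ Finset.range (I2 - 1), ρ ^ (1 + w) := by
    have h : I2 = (I2 - 1) + 1 := by omega
    rw [h, Finset.sum_range_succ', pow_zero, Nat.add_sub_cancel]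
    have hcg : ∀ i ∈ Finset.range (I2 - 1), ρ ^ (i + 1) = ρ ^ (1 + i) :=
      fun i _ => by rw [add_comm]
    rw [Finset.sum_congr rfl hcg]
    ring
  rw [← Finset.Ico_add_one_right_eq_Icc,
    ← Finset.sum_Ico_consecutive _ (show 1 ≤ I1 + 2 by omega)
      (show I1 + 2 ≤ I1 + I2 + 1 by omega)]
  have hp1 : ∑ r ∈ Finset.Ico 1 (I1 + 2),
      (∑ e ∈ Finset.range (I1 + I2), ρ ^ (cc I1 I2 r e))
      = ((I1 : ℝ) + 1) * ((I1 : ℝ) + 2) / 2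
        + ((I1 : ℝ) + 1) * (∑ w ∈ Finset.range (I2 - 1), ρ ^ (1 + w))
        + ((I1 : ℝ) * ((I1 : ℝ) + 1) / 2) * ρ ^ I2 := by
    have hc : ∀ r ∈ Finset.Ico 1 (I1 + 2),
        (∑ e ∈ Finset.range (I1 + I2), ρ ^ (cc I1 I2 r e))
          = (r : ℝ) + (∑ w ∈ Finset.range (I2 - 1), ρ ^ (1 + w))
            + ((I1 + 1 - r : ℕ) : ℝ) * ρ ^ I2 := by
      intro r hr
      simp only [Finset.mem_Ico] at hr
      exact S_eval_A ρ I1 I2 r hI2 (by omega) (by omega)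
    rw [Finset.sum_congr rfl hc]
    rw [Finset.sum_add_distrib, Finset.sum_add_distrib]
    have e1 : ∑ r ∈ Finset.Ico 1 (I1 + 2), (r : ℝ)
        = ((I1 : ℝ) + 1) * ((I1 : ℝ) + 2) / 2 := by
      rw [show Finset.Ico 1 (I1 + 2) = Finset.Icc 1 (I1 + 1) from Finset.Ico_add_one_right_eq_Icc (a := 1) (b := I1 + 1), gauss_sum]
      push_cast
      ring
    have e2 : ∑ r ∈ Finset.Ico 1 (I1 + 2),
        (∑ w ∈ Finset.range (I2 - 1), ρ ^ (1 + w))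
        = ((I1 : ℝ) + 1) * (∑ w ∈ Finset.range (I2 - 1), ρ ^ (1 + w)) := by
      rw [Finset.sum_const, Nat.card_Ico, nsmul_eq_mul]
      congr 1
      push_cast [show I1 + 2 - 1 = I1 + 1 by omega]
      ring
    have e3 : ∑ r ∈ Finset.Ico 1 (I1 + 2), ((I1 + 1 - r : ℕ) : ℝ) * ρ ^ I2
        = ((I1 : ℝ) * ((I1 : ℝ) + 1) / 2) * ρ ^ I2 := by
      rw [← Finset.sum_mul]
      congr 1
      have hc2 : ∀ r ∈ Finset.Ico 1 (I1 + 2), ((I1 + 1 - r : ℕ) : ℝ)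
          = ((I1 : ℝ) + 1) - (r : ℝ) := by
        intro r hr
        simp only [Finset.mem_Ico] at hr
        have : (I1 + 1 - r : ℕ) = I1 + 1 - r := rfl
        push_cast [Nat.cast_sub (by omega : r ≤ I1 + 1)]
        ring
      rw [Finset.sum_congr rfl hc2, Finset.sum_sub_distrib, Finset.sum_const,
        Nat.card_Ico, nsmul_eq_mul, show Finset.Ico 1 (I1 + 2) = Finset.Icc 1 (I1 + 1) from Finset.Ico_add_one_right_eq_Icc (a := 1) (b := I1 + 1), gauss_sum]
      push_cast [show I1 + 2 - 1 = I1 + 1 by omega]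
      ring
    rw [e1, e2, e3]
  have hp2 : ∑ r ∈ Finset.Ico (I1 + 2) (I1 + I2 + 1),
      (∑ e ∈ Finset.range (I1 + I2), ρ ^ (cc I1 I2 r e))
      = ((I2 : ℝ) - 1) * (1 + (∑ w ∈ Finset.range (I2 - 1), ρ ^ (1 + w)))
        + (I1 : ℝ) * (∑ w ∈ Finset.range (I2 - 1), ρ ^ (1 + w)) := by
    have hc : ∀ r ∈ Finset.Ico (I1 + 2) (I1 + I2 + 1),
        (∑ e ∈ Finset.range (I1 + I2), ρ ^ (cc I1 I2 r e))
          = (∑ w ∈ Finset.range I2, ρ ^ w) + (I1 : ℝ) * ρ ^ (r - (I1 + 1)) := by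
      intro r hr
      simp only [Finset.mem_Ico] at hr
      exact S_eval_B ρ I1 I2 r hI2 (by omega) (by omega)
    rw [Finset.sum_congr rfl hc, Finset.sum_add_distrib, Finset.sum_const,
      Nat.card_Ico, nsmul_eq_mul]
    have e4 : ∑ r ∈ Finset.Ico (I1 + 2) (I1 + I2 + 1), (I1 : ℝ) * ρ ^ (r - (I1 + 1))
        = (I1 : ℝ) * (∑ w ∈ Finset.range (I2 - 1), ρ ^ (1 + w)) := by
      rw [← Finset.mul_sum]
      congr 1
      rw [Finset.sum_Ico_eq_sum_range]
      rw [show I1 + I2 + 1 - (I1 + 2) = I2 - 1 by omega]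
      refine Finset.sum_congr rfl (fun i _ => ?_)
      congr 1
      omega
    rw [e4, hgeo0]
    have : ((I1 + I2 + 1 - (I1 + 2) : ℕ) : ℝ) = (I2 : ℝ) - 1 := by
      have h : (I1 + I2 + 1 - (I1 + 2) : ℕ) = I2 - 1 := by omega
      rw [h]
      push_cast [Nat.cast_sub hI2]
      ring
    rw [this]
  rw [hp1, hp2]
  ring

lemma main_bound (ρ : ℝ) (hρ0 : 0 ≤ ρ) (hρ1 : ρ < 1)
    (I1 I2 : ℕ) (hI2 : 1 ≤ I2) (j : ℕ) :
    (∑ t ∈ Finset.Icc (j * (I1 + I2) + 1) ((j + 1) * (I1 + I2)),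
        ∑ s ∈ Finset.Icc 1 (t - 1), rhoOne ρ I1 I2 s t) ≤
      (1 / 2) * ((1 + ρ ^ I2) / (1 - ρ ^ I2) * (I1 : ℝ) ^ 2 +
          (1 + ρ) / (1 - ρ) * (I1 : ℝ)) +
        ((I1 : ℝ) + I2) * ρ / (1 - ρ) := by
  have hIpos : 0 < I1 + I2 := by omega
  have hq0 : (0:ℝ) ≤ ρ ^ I2 := pow_nonneg hρ0 _
  have hq1 : ρ ^ I2 < 1 := pow_lt_one₀ hρ0 hρ1 (by omega)
  have h1q : (0:ℝ) < 1 - ρ ^ I2 := by linarith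
  have h1ρ : (0:ℝ) < 1 - ρ := by linarith
  have hJ : (j + 1) * (I1 + I2) = j * (I1 + I2) + (I1 + I2) := by ring
  have hstep : ∑ t ∈ Finset.Icc (j * (I1 + I2) + 1) ((j + 1) * (I1 + I2)),
      ∑ s ∈ Finset.Icc 1 (t - 1), rhoOne ρ I1 I2 s t
      ≤ ∑ t ∈ Finset.Icc (j * (I1 + I2) + 1) ((j + 1) * (I1 + I2)),
        ((1 / (1 - ρ ^ I2)) * (∑ e ∈ Finset.range (I1 + I2),
          ρ ^ (cc I1 I2 (t - j * (I1 + I2)) e)) - 1) := by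
    apply Finset.sum_le_sum
    intro t ht
    simp only [Finset.mem_Icc, hJ] at ht
    exact inner_le ρ hρ0 hρ1 I1 I2 hI2 j t ht.1 (by omega)
  refine le_trans hstep ?_
  have hre : ∑ t ∈ Finset.Icc (j * (I1 + I2) + 1) ((j + 1) * (I1 + I2)),
      (∑ e ∈ Finset.range (I1 + I2), ρ ^ (cc I1 I2 (t - j * (I1 + I2)) e))
      = ∑ r ∈ Finset.Icc 1 (I1 + I2),
        (∑ e ∈ Finset.range (I1 + I2), ρ ^ (cc I1 I2 r e)) := by
    apply Finset.sum_nbij' (fun t => t - j * (I1 + I2)) (fun r => j * (I1 + I2) + r)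
    · intro a ha; simp only [Finset.mem_Icc, hJ] at ha ⊢; omega
    · intro a ha; simp only [Finset.mem_Icc, hJ] at ha ⊢; omega
    · intro a ha; simp only [Finset.mem_Icc, hJ] at ha; omega
    · intro a ha; simp only [Finset.mem_Icc, hJ] at ha; omega
    · intro a ha; rfl
  rw [Finset.sum_sub_distrib, Finset.sum_const, ← Finset.mul_sum, hre,
    T_eval ρ I1 I2 hI2, Nat.card_Icc, hJ,
    show j * (I1 + I2) + (I1 + I2) + 1 - (j * (I1 + I2) + 1) = I1 + I2 by omega,
    nsmul_eq_mul, mul_one]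
  -- the geometric tail identity
  have hσ : (1 - ρ) * (∑ w ∈ Finset.range (I2 - 1), ρ ^ (1 + w)) = ρ - ρ ^ I2 := by
    have h1 : ∑ w ∈ Finset.range (I2 - 1), ρ ^ (1 + w)
        = ρ * ∑ w ∈ Finset.range (I2 - 1), ρ ^ w := by
      rw [Finset.mul_sum]
      refine Finset.sum_congr rfl (fun w _ => ?_)
      rw [add_comm 1 w, pow_succ]
      ring
    have h2 := geom_sum_mul ρ (I2 - 1)
    have h3 : ρ * ρ ^ (I2 - 1) = ρ ^ I2 := by
      rw [← pow_succ']
      congr 1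
      omega
    rw [h1]
    linear_combination (-ρ) * h2 - h3
  have hσ' : (∑ w ∈ Finset.range (I2 - 1), ρ ^ (1 + w)) = (ρ - ρ ^ I2) / (1 - ρ) := by
    rw [eq_div_iff h1ρ.ne']
    linear_combination hσ
  rw [hσ']
  apply le_of_eq
  push_cast
  field_simp
  ring
end SchemeOneAux


/-- **Lemma (per-round accumulation of `ρ_{s,t−1}` for the scheme `I_T¹`).**
For any `j ≥ 0`, with `I = I₁ + I₂`,
`α_j = ∑_{t=jI+1}^{(j+1)I} ∑_{s=1}^{t−1} ρ_{s,t−1}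
  ≤ (1/2)(((1+ρ^{I₂})/(1−ρ^{I₂}))I₁² + ((1+ρ)/(1−ρ))I₁) + I·ρ/(1−ρ)` and
`β_j = ∑_{t=jI+1}^{(j+1)I} ∑_{s=1}^{t−1} ρ_{s,t−1}²
  ≤ (1/2)(((1+ρ^{2I₂})/(1−ρ^{2I₂}))I₁² + ((1+ρ²)/(1−ρ²))I₁) + I·ρ²/(1−ρ²)`. -/
theorem scheme_one_alpha_beta_bound
    (ρ : ℝ) (hρ0 : 0 ≤ ρ) (hρ1 : ρ < 1)
    (I1 I2 : ℕ) (hI2 : 1 ≤ I2) (j : ℕ) :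
    (∑ t ∈ Finset.Icc (j * (I1 + I2) + 1) ((j + 1) * (I1 + I2)),
        ∑ s ∈ Finset.Icc 1 (t - 1), rhoOne ρ I1 I2 s t) ≤
      (1 / 2) * ((1 + ρ ^ I2) / (1 - ρ ^ I2) * (I1 : ℝ) ^ 2 +
          (1 + ρ) / (1 - ρ) * (I1 : ℝ)) +
        ((I1 : ℝ) + I2) * ρ / (1 - ρ) ∧
    (∑ t ∈ Finset.Icc (j * (I1 + I2) + 1) ((j + 1) * (I1 + I2)),
        ∑ s ∈ Finset.Icc 1 (t - 1), (rhoOne ρ I1 I2 s t) ^ 2) ≤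
      (1 / 2) * ((1 + ρ ^ (2 * I2)) / (1 - ρ ^ (2 * I2)) * (I1 : ℝ) ^ 2 +
          (1 + ρ ^ 2) / (1 - ρ ^ 2) * (I1 : ℝ)) +
        ((I1 : ℝ) + I2) * ρ ^ 2 / (1 - ρ ^ 2) := by
  constructor
  · exact SchemeOneAux.main_bound ρ hρ0 hρ1 I1 I2 hI2 j
  · have hsq : ∀ s t : ℕ, (rhoOne ρ I1 I2 s t) ^ 2 = rhoOne (ρ ^ 2) I1 I2 s t := by
      intro s t
      unfold rhoOne
      split_ifs with h
      · rw [← pow_mul, mul_comm, pow_mul]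
      · exact one_pow 2
    have hrw : (∑ t ∈ Finset.Icc (j * (I1 + I2) + 1) ((j + 1) * (I1 + I2)),
        ∑ s ∈ Finset.Icc 1 (t - 1), (rhoOne ρ I1 I2 s t) ^ 2)
        = ∑ t ∈ Finset.Icc (j * (I1 + I2) + 1) ((j + 1) * (I1 + I2)),
          ∑ s ∈ Finset.Icc 1 (t - 1), rhoOne (ρ ^ 2) I1 I2 s t :=
      Finset.sum_congr rfl fun t _ => Finset.sum_congr rfl fun s _ => hsq s t
    rw [hrw, pow_mul]
    have hρ20 : (0:ℝ) ≤ ρ ^ 2 := sq_nonneg ρ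
    have hρ21 : ρ ^ 2 < 1 := pow_lt_one₀ hρ0 hρ1 two_ne_zero
    exact SchemeOneAux.main_bound (ρ ^ 2) hρ20 hρ21 I1 I2 hI2 j
end

section
/- For the update scheme I_T^1, i.e., S = {t ∈ ℕ : t mod I ∉ {1,…,I_1}} with I = I_1 + I_2, for every t ≥ 1 one has ∑_{s=1}^{t−1} ρ_{s,t−1} ≤ K, where K = I_1/(1−ρ^{I_2}) + ρ/(1−ρ). -/
open Finset

/-- number of elements of `S` in `[a, a+n-1]`. -/
def cntR (I I1 a n : ℕ) : ℕ :=
  ((Finset.range n).filter (fun i => ¬ (a + i) % I ∈ Finset.Icc 1 I1)).card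

lemma cntR_split (I I1 a m n : ℕ) :
    cntR I I1 a (m + n) = cntR I I1 a m + cntR I I1 (a + m) n := by
  unfold cntR
  rw [Finset.range_add, Finset.filter_union, Finset.filter_map,
    Finset.card_union_of_disjoint, Finset.card_map]
  · congr 2
    apply Finset.filter_congr
    intro i _
    simp [addLeftEmbedding_apply, add_assoc]
  · rw [Finset.disjoint_left]
    intro x hx hx2
    have hxm : x < m := Finset.mem_range.mp (Finset.mem_of_mem_filter x hx)
    rw [Finset.mem_map] at hx2
    obtain ⟨y, -, rfl⟩ := hx2
    simp only [addLeftEmbedding_apply] at hxm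
    omega

lemma cntR_one (I I1 a : ℕ) :
    cntR I I1 a 1 = if (a % I) ∈ Finset.Icc 1 I1 then 0 else 1 := by
  unfold cntR
  rw [Finset.range_one, Finset.filter_singleton]
  simp only [add_zero, Finset.mem_Icc]
  by_cases h : 1 ≤ a % I ∧ a % I ≤ I1
  · rw [if_neg (by omega), if_pos h]
    simp
  · rw [if_pos (by omega), if_neg h]
    simp

lemma cntR_block {I1 I2 : ℕ} (hI2 : 1 ≤ I2) (a : ℕ) :
    cntR (I1 + I2) I1 a (I1 + I2) = I2 := by
  set I := I1 + I2 with hI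
  induction a with
  | zero =>
      unfold cntR
      have h1 : ∀ i ∈ Finset.range I, ((0 + i) % I ∉ Finset.Icc 1 I1) ↔ (i ∉ Finset.Icc 1 I1) := by
        intro i hi
        simp only [Finset.mem_range] at hi
        rw [zero_add, Nat.mod_eq_of_lt hi]
      rw [Finset.filter_congr h1, Finset.filter_not, Finset.card_sdiff_of_subset (Finset.filter_subset _ _),
        Finset.card_range, Finset.filter_mem_eq_inter]
      have : Finset.range I ∩ Finset.Icc 1 I1 = Finset.Icc 1 I1 := by
        apply Finset.inter_eq_right.mpr
        intro x hx
        simp only [Finset.mem_Icc] at hx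
        simp only [Finset.mem_range]
        omega
      rw [this, Nat.card_Icc]
      omega
  | succ a ih =>
      have e1 : cntR I I1 a (1 + (I - 1)) = cntR I I1 a 1 + cntR I I1 (a + 1) (I - 1) :=
        cntR_split ..
      have e2 : cntR I I1 (a + 1) ((I - 1) + 1)
          = cntR I I1 (a + 1) (I - 1) + cntR I I1 (a + 1 + (I - 1)) 1 := cntR_split ..
      have hIpos : 1 ≤ I := by omega
      have h3 : a + 1 + (I - 1) = a + I := by omega
      have h4 : (a + I) % I = a % I := by simp [Nat.add_mod_right]
      have h5 : cntR I I1 (a + 1 + (I - 1)) 1 = cntR I I1 a 1 := by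
        rw [cntR_one, cntR_one, h3, h4]
      have h6 : 1 + (I - 1) = I := by omega
      have h7 : (I - 1) + 1 = I := by omega
      rw [h6] at e1; rw [h7] at e2
      omega

lemma cntR_lower {I1 I2 : ℕ} (hI2 : 1 ≤ I2) :
    ∀ n a, I2 * (n / (I1 + I2)) ≤ cntR (I1 + I2) I1 a n := by
  intro n
  induction n using Nat.strong_induction_on with
  | _ n ih =>
    intro a
    by_cases h : n < I1 + I2
    · rw [Nat.div_eq_of_lt h]
      simp
    · push_neg at h
      have hsplit : n = (I1 + I2) + (n - (I1 + I2)) := by omega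
      rw [hsplit, cntR_split, cntR_block hI2]
      have hdiv : ((I1 + I2) + (n - (I1 + I2))) / (I1 + I2) = (n - (I1 + I2)) / (I1 + I2) + 1 := by
        rw [add_comm, Nat.add_div_right _ (by omega)]
      rw [hdiv]
      have := ih (n - (I1 + I2)) (by omega) (a + (I1 + I2))
      have hmul : I2 * ((n - (I1 + I2)) / (I1 + I2) + 1)
          = I2 * ((n - (I1 + I2)) / (I1 + I2)) + I2 := by ring
      omega

lemma card_filter_Icc_eq_cntR {I I1 s t : ℕ} (hst : s < t) :
    ((Finset.Icc s (t - 1)).filter (fun l => ¬ l % I ∈ Finset.Icc 1 I1)).card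
      = cntR I I1 s (t - s) := by
  have h1 : Finset.Icc s (t - 1) = Finset.Ico s t := by
    rw [← Finset.Ico_add_one_right_eq_Icc]
    congr 1
    omega
  have h2 : Finset.Ico s t = (Finset.range (t - s)).map (addLeftEmbedding s) := by
    rw [Finset.range_eq_Ico, Finset.map_add_left_Ico, add_zero]
    congr 1
    omega
  rw [h1, h2, Finset.filter_map, Finset.card_map]
  unfold cntR
  congr 1

lemma geom_le_aux {x : ℝ} (h0 : 0 ≤ x) (h1 : x < 1) (n : ℕ) :
    ∑ i ∈ Finset.range n, x ^ i ≤ 1 / (1 - x) := by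
  have h2 : (0:ℝ) < 1 - x := by linarith
  rw [geom_sum_eq (by intro hx; rw [hx] at h1; exact lt_irrefl _ h1) n]
  have h3 : (x ^ n - 1) / (x - 1) = (1 - x ^ n) / (1 - x) := by
    rw [← neg_div_neg_eq]
    ring_nf
  rw [h3, div_le_div_iff₀ h2 h2]
  have : (0:ℝ) ≤ x ^ n := pow_nonneg h0 n
  nlinarith

/-- **Lemma (uniform bound `∑_{s=1}^{t−1} ρ_{s,t−1} ≤ K` for the scheme `I_T¹`).**
For every `t ≥ 1`, `∑_{s=1}^{t−1} ρ_{s,t−1} ≤ K` where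
`K = I₁/(1−ρ^{I₂}) + ρ/(1−ρ)`. -/
theorem scheme_one_row_sum_bound
    (ρ : ℝ) (hρ0 : 0 ≤ ρ) (hρ1 : ρ < 1)
    (I1 I2 : ℕ) (hI2 : 1 ≤ I2)
    (t : ℕ) (ht : 1 ≤ t) :
    ∑ s ∈ Finset.Icc 1 (t - 1), rhoOne ρ I1 I2 s t ≤
      (I1 : ℝ) / (1 - ρ ^ I2) + ρ / (1 - ρ) := by
  set I := I1 + I2 with hIdef
  have hIpos : 1 ≤ I := by omega
  set T := Finset.Icc 1 (t - 1) with hT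
  -- exponent
  set c : ℕ → ℕ := fun s =>
    ((Finset.Icc s (t - 1)).filter (fun l => ¬ l % I ∈ Finset.Icc 1 I1)).card with hc
  have hmemT : ∀ s ∈ T, 1 ≤ s ∧ s ≤ t - 1 ∧ s < t := by
    intro s hs
    rw [hT, Finset.mem_Icc] at hs
    exact ⟨hs.1, hs.2, by omega⟩
  have hrho : ∀ s ∈ T, rhoOne ρ I1 I2 s t = ρ ^ (c s) := by
    intro s hs
    rw [rhoOne, if_pos (hmemT s hs).2.2]
  rw [Finset.sum_congr rfl hrho]
  -- positivity facts
  have h1ρ : (0:ℝ) < 1 - ρ := by linarith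
  have hx0 : (0:ℝ) ≤ ρ ^ I2 := pow_nonneg hρ0 I2
  have hx1 : ρ ^ I2 < 1 := pow_lt_one₀ hρ0 hρ1 (by omega)
  have h1x : (0:ℝ) < 1 - ρ ^ I2 := by linarith
  -- split into non-S (p) and S (¬p)
  rw [← Finset.sum_filter_add_sum_filter_not T (fun s => s % I ∈ Finset.Icc 1 I1)]
  have hA : ∑ s ∈ T.filter (fun s => s % I ∈ Finset.Icc 1 I1), ρ ^ (c s)
      ≤ (I1 : ℝ) / (1 - ρ ^ I2) := by
    set A := T.filter (fun s => s % I ∈ Finset.Icc 1 I1) with hAdef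
    rw [← Finset.sum_fiberwise_of_maps_to (g := fun s => s % I) (t := Finset.Icc 1 I1)
      (fun s hs => (Finset.mem_filter.mp hs).2) (fun s => ρ ^ (c s))]
    have hinner : ∀ r ∈ Finset.Icc 1 I1,
        ∑ s ∈ A.filter (fun s => s % I = r), ρ ^ (c s) ≤ 1 / (1 - ρ ^ I2) := by
      intro r hr
      set Ar := A.filter (fun s => s % I = r) with hAr
      set m : ℕ → ℕ := fun s => (t - s) / I with hm
      have hmemAr : ∀ s ∈ Ar, s % I = r ∧ 1 ≤ s ∧ s ≤ t - 1 ∧ s < t := by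
        intro s hs
        rw [hAr, Finset.mem_filter] at hs
        obtain ⟨hsA, hsr⟩ := hs
        rw [hAdef, Finset.mem_filter] at hsA
        exact ⟨hsr, (hmemT s hsA.1).1, (hmemT s hsA.1).2.1, (hmemT s hsA.1).2.2⟩
      -- pointwise bound
      have hpt : ∀ s ∈ Ar, ρ ^ (c s) ≤ (ρ ^ I2) ^ (m s) := by
        intro s hs
        have hst := (hmemAr s hs).2.2.2
        have hcs : I2 * (m s) ≤ c s := by
          rw [hc]
          simp only
          rw [card_filter_Icc_eq_cntR hst]
          exact cntR_lower hI2 (t - s) s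
        calc ρ ^ (c s) ≤ ρ ^ (I2 * m s) := pow_le_pow_of_le_one hρ0 (le_of_lt hρ1) hcs
          _ = (ρ ^ I2) ^ (m s) := by rw [pow_mul]
      have step1 : ∑ s ∈ Ar, ρ ^ (c s) ≤ ∑ s ∈ Ar, (ρ ^ I2) ^ (m s) :=
        Finset.sum_le_sum hpt
      -- m strictly decreasing on Ar
      have hanti : ∀ s ∈ Ar, ∀ s' ∈ Ar, s < s' → m s' < m s := by
        intro s hs s' hs' hlt
        obtain ⟨hsr, hs1, hs2, hs3⟩ := hmemAr s hs
        obtain ⟨hsr', hs1', hs2', hs3'⟩ := hmemAr s' hs'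
        have hmod : s ≡ s' [MOD I] := by
          unfold Nat.ModEq
          rw [hsr, hsr']
        have hdvd : I ∣ s' - s := (Nat.modEq_iff_dvd' (le_of_lt hlt)).mp hmod
        have hge : I ≤ s' - s := Nat.le_of_dvd (by omega) hdvd
        have heq : t - s = (t - s') + (s' - s) := by omega
        have h5 : (t - s') + I ≤ t - s := by omega
        have h6 : (t - s') / I + 1 = ((t - s') + I) / I := by
          rw [Nat.add_div_right _ (by omega)]
        have h7 : ((t - s') + I) / I ≤ (t - s) / I := Nat.div_le_div_right h5
        show (t - s') / I < (t - s) / I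
        omega
      have hinj : Set.InjOn m Ar := by
        intro a ha b hb hab
        rcases lt_trichotomy a b with h | h | h
        · exact absurd hab (Nat.ne_of_gt (hanti a ha b hb h))
        · exact h
        · exact absurd hab (Nat.ne_of_lt (hanti b hb a ha h))
      have step2 : ∑ s ∈ Ar, (ρ ^ I2) ^ (m s) = ∑ k ∈ Ar.image m, (ρ ^ I2) ^ k := by
        rw [Finset.sum_image (fun x hx y hy hxy => hinj hx hy hxy)]
      have hsub : Ar.image m ⊆ Finset.range (t + 1) := by
        intro k hk
        rw [Finset.mem_image] at hk
        obtain ⟨s, hs, rfl⟩ := hk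
        rw [Finset.mem_range]
        show (t - s) / I < t + 1
        have : (t - s) / I ≤ t - s := Nat.div_le_self _ _
        omega
      have step3 : ∑ k ∈ Ar.image m, (ρ ^ I2) ^ k ≤ ∑ k ∈ Finset.range (t + 1), (ρ ^ I2) ^ k :=
        Finset.sum_le_sum_of_subset_of_nonneg hsub
          (fun k _ _ => pow_nonneg hx0 k)
      calc ∑ s ∈ Ar, ρ ^ (c s) ≤ ∑ k ∈ Finset.range (t + 1), (ρ ^ I2) ^ k := by
            rw [← step2] at step3; linarith
        _ ≤ 1 / (1 - ρ ^ I2) := geom_le_aux hx0 hx1 _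
    calc ∑ r ∈ Finset.Icc 1 I1, ∑ s ∈ A.filter (fun s => s % I = r), ρ ^ (c s)
        ≤ ∑ r ∈ Finset.Icc 1 I1, 1 / (1 - ρ ^ I2) := Finset.sum_le_sum hinner
      _ = (I1 : ℝ) / (1 - ρ ^ I2) := by
          rw [Finset.sum_const, Nat.card_Icc]
          simp only [Nat.add_sub_cancel, nsmul_eq_mul]
          ring
  have hB : ∑ s ∈ T.filter (fun s => ¬ s % I ∈ Finset.Icc 1 I1), ρ ^ (c s)
      ≤ ρ / (1 - ρ) := by
    set B := T.filter (fun s => ¬ s % I ∈ Finset.Icc 1 I1) with hBdef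
    have hmemB : ∀ s ∈ B, ¬ s % I ∈ Finset.Icc 1 I1 ∧ 1 ≤ s ∧ s ≤ t - 1 ∧ s < t := by
      intro s hs
      rw [hBdef, Finset.mem_filter] at hs
      exact ⟨hs.2, (hmemT s hs.1).1, (hmemT s hs.1).2.1, (hmemT s hs.1).2.2⟩
    have hanti : ∀ s ∈ B, ∀ s' ∈ B, s < s' → c s' < c s := by
      intro s hs s' hs' hlt
      obtain ⟨hsS, hs1, hs2, hs3⟩ := hmemB s hs
      obtain ⟨hsS', hs1', hs2', hs3'⟩ := hmemB s' hs'
      apply Finset.card_lt_card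
      have hsubset : (Finset.Icc s' (t-1)).filter (fun l => ¬ l % I ∈ Finset.Icc 1 I1)
          ⊆ (Finset.Icc s (t-1)).filter (fun l => ¬ l % I ∈ Finset.Icc 1 I1) :=
        Finset.filter_subset_filter _ (Finset.Icc_subset_Icc_left (le_of_lt hlt))
      rw [Finset.ssubset_iff_of_subset hsubset]
      refine ⟨s, ?_, ?_⟩
      · rw [Finset.mem_filter, Finset.mem_Icc]
        exact ⟨⟨le_refl s, hs2⟩, hsS⟩
      · rw [Finset.mem_filter, Finset.mem_Icc]
        push_neg
        intro h
        omega
    have hinj : Set.InjOn c B := by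
      intro a ha b hb hab
      rcases lt_trichotomy a b with h | h | h
      · exact absurd hab (Nat.ne_of_gt (hanti a ha b hb h))
      · exact h
      · exact absurd hab (Nat.ne_of_lt (hanti b hb a ha h))
    have hc1 : ∀ s ∈ B, 1 ≤ c s ∧ c s ≤ t := by
      intro s hs
      obtain ⟨hsS, hs1, hs2, hs3⟩ := hmemB s hs
      constructor
      · rw [hc]
        simp only
        rw [Nat.one_le_iff_ne_zero, ← Nat.pos_iff_ne_zero, Finset.card_pos]
        refine ⟨s, ?_⟩
        rw [Finset.mem_filter, Finset.mem_Icc]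
        exact ⟨⟨le_refl s, hs2⟩, hsS⟩
      · calc c s ≤ (Finset.Icc s (t-1)).card := Finset.card_filter_le _ _
          _ ≤ t := by rw [Nat.card_Icc]; omega
    have step1 : ∑ s ∈ B, ρ ^ (c s) = ∑ k ∈ B.image c, ρ ^ k := by
      rw [Finset.sum_image (fun x hx y hy hxy => hinj hx hy hxy)]
    have hsub : B.image c ⊆ Finset.Icc 1 t := by
      intro k hk
      rw [Finset.mem_image] at hk
      obtain ⟨s, hs, rfl⟩ := hk
      rw [Finset.mem_Icc]
      exact (hc1 s hs)
    have step2 : ∑ k ∈ B.image c, ρ ^ k ≤ ∑ k ∈ Finset.Icc 1 t, ρ ^ k :=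
      Finset.sum_le_sum_of_subset_of_nonneg hsub (fun k _ _ => pow_nonneg hρ0 k)
    have step3 : ∑ k ∈ Finset.Icc 1 t, ρ ^ k ≤ ρ / (1 - ρ) := by
      have hmap : Finset.Icc 1 t = (Finset.range t).map (addLeftEmbedding 1) := by
        rw [Finset.range_eq_Ico, Finset.map_add_left_Ico, add_zero, ← Finset.Ico_add_one_right_eq_Icc]
        congr 1
        omega
      rw [hmap, Finset.sum_map]
      simp only [addLeftEmbedding_apply]
      have : ∀ i, ρ ^ (1 + i) = ρ * ρ ^ i := fun i => by rw [pow_add, pow_one]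
      rw [Finset.sum_congr rfl (fun i _ => this i), ← Finset.mul_sum]
      calc ρ * ∑ i ∈ Finset.range t, ρ ^ i ≤ ρ * (1 / (1 - ρ)) :=
            mul_le_mul_of_nonneg_left (geom_le_aux hρ0 hρ1 t) hρ0
        _ = ρ / (1 - ρ) := by ring
    rw [step1]
    linarith
  linarith
end

section
/- For the update scheme I_T^1, i.e., S = {t ∈ ℕ : t mod I ∉ {1,…,I_1}} with I = I_1 + I_2, and T = (R+1)·I for some integer R ≥ 0, for every s ∈ {1,…,T} one has w_s := ∑_{t=s+1}^{T} ρ_{s,t−1} ≤ K, where K = I_1/(1−ρ^{I_2}) + ρ/(1−ρ). -/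
open Finset

/-- In each period of length `I1 + I2`, exactly `I1` integers have residue in `[1, I1]`. -/
lemma period_count (I1 I2 : ℕ) (hI2 : 1 ≤ I2) (a : ℕ) :
    ((Finset.Ico a (a + (I1 + I2))).filter
      (fun l => l % (I1 + I2) ∈ Finset.Icc 1 I1)).card = I1 := by
  induction a with
  | zero =>
    have h : ((Finset.Ico 0 (I1 + I2)).filter
        (fun l => l % (I1 + I2) ∈ Finset.Icc 1 I1)) = Finset.Icc 1 I1 := by
      ext l
      simp only [mem_filter, Finset.mem_Ico, Finset.mem_Icc, Nat.zero_le, true_and]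
      constructor
      · rintro ⟨h1, h2⟩; rwa [Nat.mod_eq_of_lt h1] at h2
      · intro h
        have hl : l < I1 + I2 := lt_of_le_of_lt h.2 (by omega)
        exact ⟨hl, by rwa [Nat.mod_eq_of_lt hl]⟩
    rw [zero_add, h, Nat.card_Icc]
    omega
  | succ a ih =>
    have hcard : ∀ b c : ℕ, ((Finset.Ico b c).filter
        (fun l => l % (I1 + I2) ∈ Finset.Icc 1 I1)).card
        = ∑ l ∈ Finset.Ico b c, (if l % (I1 + I2) ∈ Finset.Icc 1 I1 then 1 else 0) := by
      intro b c; rw [Finset.card_filter]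
    rw [hcard] at ih ⊢
    have h1 : a + 1 + (I1 + I2) = (a + (I1 + I2)) + 1 := by omega
    rw [h1, Finset.sum_Ico_succ_top (by omega)]
    rw [Finset.sum_eq_sum_Ico_succ_bot (by omega : a < a + (I1 + I2))] at ih
    have hmod : (a + (I1 + I2)) % (I1 + I2) = a % (I1 + I2) := Nat.add_mod_right a _
    rw [hmod]
    omega

/-- In each period of length `I1 + I2`, exactly `I2` integers have residue outside `[1, I1]`. -/
lemma period_count_not (I1 I2 : ℕ) (hI2 : 1 ≤ I2) (a : ℕ) :
    ((Finset.Ico a (a + (I1 + I2))).filter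
      (fun l => ¬ l % (I1 + I2) ∈ Finset.Icc 1 I1)).card = I2 := by
  have h1 := period_count I1 I2 hI2 a
  have h2 := Finset.card_filter_add_card_filter_not
    (s := Finset.Ico a (a + (I1 + I2)))
    (p := fun l => l % (I1 + I2) ∈ Finset.Icc 1 I1)
  have h3 : (Finset.Ico a (a + (I1 + I2))).card = I1 + I2 := by
    rw [Nat.card_Ico]; omega
  omega

/-- In `j` consecutive periods there are exactly `I2 * j` integers with residue
outside `[1, I1]`. -/
lemma blocks_count (I1 I2 : ℕ) (hI2 : 1 ≤ I2) (a j : ℕ) :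
    ((Finset.Ico a (a + (I1 + I2) * j)).filter
      (fun l => ¬ l % (I1 + I2) ∈ Finset.Icc 1 I1)).card = I2 * j := by
  induction j with
  | zero => simp
  | succ j ih =>
    have hsplit : Finset.Ico a (a + (I1 + I2) * (j + 1))
        = Finset.Ico a (a + (I1 + I2) * j) ∪
          Finset.Ico (a + (I1 + I2) * j) (a + (I1 + I2) * j + (I1 + I2)) := by
      rw [Finset.Ico_union_Ico_eq_Ico (by omega) (by omega)]
      congr 1
      ring
    rw [hsplit, Finset.filter_union, Finset.card_union_of_disjoint
      (Finset.disjoint_filter_filter (Finset.Ico_disjoint_Ico_consecutive _ _ _)),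
      ih, period_count_not I1 I2 hI2]
    ring

lemma geom_aux (x : ℝ) (hx0 : 0 ≤ x) (hx1 : x < 1) (n : ℕ) :
    ∑ i ∈ Finset.range n, x ^ i ≤ 1 / (1 - x) := by
  rw [geom_sum_eq (ne_of_lt hx1) n]
  have h1 : (0:ℝ) < 1 - x := by linarith
  have h2 : (x ^ n - 1) / (x - 1) = (1 - x ^ n) / (1 - x) := by
    rw [← neg_sub (1:ℝ) (x ^ n), ← neg_sub (1:ℝ) x, neg_div_neg_eq]
  rw [h2]
  have h3 : (1:ℝ) - x ^ n ≤ 1 := by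
    have : (0:ℝ) ≤ x ^ n := pow_nonneg hx0 n
    linarith
  gcongr

/-- **Lemma (uniform bound `w_s = ∑_{t=s+1}^{T} ρ_{s,t−1} ≤ K` for the scheme `I_T¹`).**
For `T = (R+1)·I` and every `s ∈ [T]`, `∑_{t=s+1}^T ρ_{s,t−1} ≤ K` where
`K = I₁/(1−ρ^{I₂}) + ρ/(1−ρ)`. -/
theorem scheme_one_column_sum_bound
    (ρ : ℝ) (hρ0 : 0 ≤ ρ) (hρ1 : ρ < 1)
    (I1 I2 : ℕ) (hI2 : 1 ≤ I2)
    (T R : ℕ) (hT : T = (R + 1) * (I1 + I2))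
    (s : ℕ) (hs1 : 1 ≤ s) (hsT : s ≤ T) :
    ∑ t ∈ Finset.Icc (s + 1) T, rhoOne ρ I1 I2 s t ≤
      (I1 : ℝ) / (1 - ρ ^ I2) + ρ / (1 - ρ) := by
  have hIpos : 0 < I1 + I2 := by omega
  have hT1 : 1 ≤ T := by
    have : 0 < (R + 1) * (I1 + I2) := Nat.mul_pos (by omega) hIpos
    omega
  have hρI2 : ρ ^ I2 < 1 := pow_lt_one₀ hρ0 hρ1 (by omega)
  have hρI2nn : 0 ≤ ρ ^ I2 := pow_nonneg hρ0 I2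
  set g : ℕ → ℕ := fun u => ((Finset.Icc s u).filter
      (fun l => ¬ l % (I1 + I2) ∈ Finset.Icc 1 I1)).card with hgdef
  -- rewrite the sum via the shift t = u + 1
  have hmap : (Finset.Icc s (T - 1)).map (addRightEmbedding 1) = Finset.Icc (s + 1) T := by
    rw [Finset.map_add_right_Icc]
    congr 1
    omega
  have hsum : ∑ t ∈ Finset.Icc (s + 1) T, rhoOne ρ I1 I2 s t
      = ∑ u ∈ Finset.Icc s (T - 1), ρ ^ g u := by
    rw [← hmap, Finset.sum_map]
    apply Finset.sum_congr rfl
    intro u hu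
    simp only [Finset.mem_Icc] at hu
    simp only [addRightEmbedding_apply]
    rw [rhoOne, if_pos (by omega : s < u + 1), Nat.add_sub_cancel]
  -- lower bound on g by completed periods
  have hgeq : ∀ u, s ≤ u → I2 * ((u - s) / (I1 + I2)) ≤ g u := by
    intro u hu
    have hsub : Finset.Ico s (s + (I1 + I2) * ((u - s) / (I1 + I2))) ⊆ Finset.Icc s u := by
      intro x hx
      simp only [Finset.mem_Ico, Finset.mem_Icc] at hx ⊢
      have h2 : (I1 + I2) * ((u - s) / (I1 + I2)) ≤ u - s := by
        rw [mul_comm]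
        exact Nat.div_mul_le_self _ _
      omega
    calc I2 * ((u - s) / (I1 + I2))
        = ((Finset.Ico s (s + (I1 + I2) * ((u - s) / (I1 + I2)))).filter
            (fun l => ¬ l % (I1 + I2) ∈ Finset.Icc 1 I1)).card :=
          (blocks_count I1 I2 hI2 s _).symm
      _ ≤ g u := Finset.card_le_card (Finset.filter_subset_filter _ hsub)
  rw [hsum, ← Finset.sum_filter_add_sum_filter_not (Finset.Icc s (T - 1))
    (fun l => l % (I1 + I2) ∈ Finset.Icc 1 I1)]
  have hB : ∑ u ∈ (Finset.Icc s (T - 1)).filter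
      (fun l => l % (I1 + I2) ∈ Finset.Icc 1 I1), ρ ^ g u ≤ (I1 : ℝ) / (1 - ρ ^ I2) := by
    set B := (Finset.Icc s (T - 1)).filter
      (fun l => l % (I1 + I2) ∈ Finset.Icc 1 I1) with hBdef
    have hmaps : ∀ u ∈ B, (u - s) / (I1 + I2) ∈ Finset.range (R + 1) := by
      intro u hu
      simp only [hBdef, Finset.mem_filter, Finset.mem_Icc] at hu
      simp only [Finset.mem_range]
      rw [Nat.div_lt_iff_lt_mul hIpos]
      omega
    calc ∑ u ∈ B, ρ ^ g u
        ≤ ∑ u ∈ B, ρ ^ (I2 * ((u - s) / (I1 + I2))) := by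
          apply Finset.sum_le_sum
          intro u hu
          simp only [hBdef, Finset.mem_filter, Finset.mem_Icc] at hu
          exact pow_le_pow_of_le_one hρ0 hρ1.le (hgeq u hu.1.1)
      _ = ∑ j ∈ Finset.range (R + 1), ∑ u ∈ B.filter (fun u => (u - s) / (I1 + I2) = j),
            ρ ^ (I2 * ((u - s) / (I1 + I2))) :=
          (Finset.sum_fiberwise_of_maps_to hmaps _).symm
      _ ≤ ∑ j ∈ Finset.range (R + 1), (I1 : ℝ) * (ρ ^ I2) ^ j := by
          apply Finset.sum_le_sum
          intro j _
          have heq : ∀ u ∈ B.filter (fun u => (u - s) / (I1 + I2) = j),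
              ρ ^ (I2 * ((u - s) / (I1 + I2))) = (ρ ^ I2) ^ j := by
            intro u hu
            simp only [Finset.mem_filter] at hu
            rw [hu.2, ← pow_mul]
          rw [Finset.sum_congr rfl heq, Finset.sum_const, nsmul_eq_mul]
          apply mul_le_mul_of_nonneg_right _ (pow_nonneg hρI2nn j)
          have hcard : (B.filter (fun u => (u - s) / (I1 + I2) = j)).card ≤ I1 := by
            have hsub : B.filter (fun u => (u - s) / (I1 + I2) = j)
                ⊆ (Finset.Ico (s + (I1 + I2) * j) (s + (I1 + I2) * j + (I1 + I2))).filter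
                  (fun l => l % (I1 + I2) ∈ Finset.Icc 1 I1) := by
              intro u hu
              simp only [hBdef, Finset.mem_filter, Finset.mem_Icc, Finset.mem_Ico] at hu ⊢
              obtain ⟨⟨⟨hsu, huT⟩, hPu⟩, hj⟩ := hu
              have hdm := Nat.div_add_mod (u - s) (I1 + I2)
              have hm : (u - s) % (I1 + I2) < I1 + I2 := Nat.mod_lt _ hIpos
              rw [hj] at hdm
              exact ⟨⟨by omega, by omega⟩, hPu⟩
            calc (B.filter (fun u => (u - s) / (I1 + I2) = j)).card
                ≤ _ := Finset.card_le_card hsub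
              _ = I1 := period_count I1 I2 hI2 _
          exact_mod_cast hcard
      _ = (I1 : ℝ) * ∑ j ∈ Finset.range (R + 1), (ρ ^ I2) ^ j := by
          rw [Finset.mul_sum]
      _ ≤ (I1 : ℝ) * (1 / (1 - ρ ^ I2)) := by
          apply mul_le_mul_of_nonneg_left (geom_aux _ hρI2nn hρI2 _) (by positivity)
      _ = (I1 : ℝ) / (1 - ρ ^ I2) := by ring
  have hA : ∑ u ∈ (Finset.Icc s (T - 1)).filter
      (fun l => ¬ l % (I1 + I2) ∈ Finset.Icc 1 I1), ρ ^ g u ≤ ρ / (1 - ρ) := by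
    set A := (Finset.Icc s (T - 1)).filter
      (fun l => ¬ l % (I1 + I2) ∈ Finset.Icc 1 I1) with hAdef
    have hkey : ∀ u ∈ A, ∀ v ∈ A, u < v → g u < g v := by
      intro u hu v hv huv
      simp only [hAdef, Finset.mem_filter, Finset.mem_Icc] at hu hv
      apply Finset.card_lt_card
      constructor
      · exact Finset.filter_subset_filter _ (Finset.Icc_subset_Icc_right (le_of_lt huv))
      · intro hcontra
        have hvmem : v ∈ (Finset.Icc s v).filter
            (fun l => ¬ l % (I1 + I2) ∈ Finset.Icc 1 I1) := by
          simp only [Finset.mem_filter, Finset.mem_Icc]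
          exact ⟨⟨hv.1.1, le_refl v⟩, hv.2⟩
        have h2 := hcontra hvmem
        simp only [Finset.mem_filter, Finset.mem_Icc] at h2
        omega
    have hinj : ∀ u ∈ A, ∀ v ∈ A, g u = g v → u = v := by
      intro u hu v hv hguv
      rcases lt_trichotomy u v with h | h | h
      · exact absurd hguv (Nat.ne_of_lt (hkey u hu v hv h))
      · exact h
      · exact absurd hguv.symm (Nat.ne_of_lt (hkey v hv u hu h))
    have himg : A.image g ⊆ Finset.Icc 1 T := by
      intro k hk
      obtain ⟨u, hu, rfl⟩ := Finset.mem_image.mp hk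
      simp only [hAdef, Finset.mem_filter, Finset.mem_Icc] at hu
      simp only [Finset.mem_Icc]
      constructor
      · apply Nat.one_le_iff_ne_zero.mpr
        apply Finset.card_ne_zero_of_mem (a := u)
        simp only [Finset.mem_filter, Finset.mem_Icc]
        exact ⟨⟨hu.1.1, le_refl u⟩, hu.2⟩
      · calc g u ≤ (Finset.Icc s u).card := Finset.card_filter_le _ _
          _ = u + 1 - s := Nat.card_Icc s u
          _ ≤ T := by omega
    calc ∑ u ∈ A, ρ ^ g u
        = ∑ k ∈ A.image g, ρ ^ k := (Finset.sum_image hinj).symm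
      _ ≤ ∑ k ∈ Finset.Icc 1 T, ρ ^ k :=
          Finset.sum_le_sum_of_subset_of_nonneg himg (fun k _ _ => pow_nonneg hρ0 k)
      _ = ∑ i ∈ Finset.range T, ρ ^ (1 + i) := by
          rw [← Finset.Ico_add_one_right_eq_Icc, Finset.sum_Ico_eq_sum_range]
          simp
      _ = ρ * ∑ i ∈ Finset.range T, ρ ^ i := by
          rw [Finset.mul_sum]
          exact Finset.sum_congr rfl fun i _ => by rw [pow_add, pow_one]
      _ ≤ ρ * (1 / (1 - ρ)) :=
          mul_le_mul_of_nonneg_left (geom_aux ρ hρ0 hρ1 T) hρ0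
      _ = ρ / (1 - ρ) := by ring
  exact add_le_add hB hA
end
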